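/- arXiv:2512.24320 — 13 statements merged into one kernel-verified Lean document; each statement's English description precedes it below -/
import Mathlib

section
/- Let c ≥ 1 and let D = (0, d_1, ..., d_c) be a degree sequence. Then the sum of the entries of B(D) with even index equals the sum of the entries with odd index, i.e. ∑_{k} B_{2k}(D) = ∑_{k} B_{2k+1}(D), and consequently the total sum ∑_{i=0}^{c} B_i(D) is an even integer. -/
open Finset Polynomial in
private lemma ldc_aux (x y : ℚ) : (Lagrange.basisDivisor x y).leadingCoeff = (x - y)⁻¹ := by
  rw [Lagrange.basisDivisor, leadingCoeff_mul, leadingCoeff_C,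
    (monic_X_sub_C y).leadingCoeff, mul_one]

open Finset Polynomial in
private lemma key_aux {c : ℕ} (hc : 1 ≤ c) (v : Fin (c+1) → ℚ) (hinj : Function.Injective v) :
    ∑ i : Fin (c+1), (∏ j ∈ Finset.univ.erase i, (v i - v j))⁻¹ = 0 := by
  have hvs : Set.InjOn v (Finset.univ : Finset (Fin (c+1))) := hinj.injOn
  have hsum := Lagrange.sum_basis hvs Finset.univ_nonempty
  have h1 : ((1 : ℚ[X])).coeff c = 0 := by
    rw [coeff_one, if_neg]; omega
  have hcoeff : (∑ j : Fin (c+1), Lagrange.basis Finset.univ v j).coeff c = 0 := by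
    rw [hsum, h1]
  rw [finset_sum_coeff] at hcoeff
  rw [← hcoeff]
  apply Finset.sum_congr rfl
  intro i _
  have hdeg : (Lagrange.basis Finset.univ v i).degree = c := by
    rw [Lagrange.degree_basis hvs (mem_univ i)]
    simp
  have hnd : (Lagrange.basis Finset.univ v i).natDegree = c := natDegree_eq_of_degree_eq_some hdeg
  have h2 : (Lagrange.basis Finset.univ v i).coeff c
      = (Lagrange.basis Finset.univ v i).leadingCoeff := by
    rw [Polynomial.leadingCoeff, hnd]
  rw [h2, Lagrange.basis, leadingCoeff_prod, ← Finset.prod_inv_distrib]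
  exact Finset.prod_congr rfl fun j _ => (ldc_aux _ _).symm

open Finset in
private lemma sign_aux {c : ℕ} (v : Fin (c+1) → ℚ) (hv : StrictMono v) (i : Fin (c+1)) :
    ∏ j ∈ Finset.univ.erase i, (v i - v j)
      = (-1)^(c - (i:ℕ)) * ∏ j ∈ Finset.univ.erase i, |v i - v j| := by
  have h : ∀ j ∈ Finset.univ.erase i, v i - v j
      = (if i < j then (-1:ℚ) else 1) * |v i - v j| := by
    intro j hj
    have hji : j ≠ i := (mem_erase.mp hj).1
    rcases lt_or_gt_of_ne hji with h1 | h1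
    · rw [if_neg (not_lt.mpr h1.le), one_mul, abs_of_pos (sub_pos.mpr (hv h1))]
    · rw [if_pos h1, abs_of_neg (sub_neg.mpr (hv h1)), neg_one_mul, neg_neg]
  rw [Finset.prod_congr rfl h, Finset.prod_mul_distrib]
  congr 1
  rw [Finset.prod_ite, Finset.prod_const, Finset.prod_const, one_pow, mul_one]
  congr 1
  have h2 : (Finset.univ.erase i).filter (fun j => i < j) = Finset.Ioi i := by
    ext j; simp [Finset.mem_Ioi, and_comm]
    intro h; exact h.ne'
  rw [h2, Fin.card_Ioi]; omega

/-- The pure Betti ratio `π_i(D)` of a degree sequence `D = (d_0, …, d_c)`: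
`π_i(D) = ∏_{j=1, j≠i}^{c} d_j / |d_j − d_i|` (so `π_0(D) = 1`). -/
noncomputable def piD {c : ℕ} (d : Fin (c + 1) → ℤ) (i : Fin (c + 1)) : ℚ :=
  ∏ j ∈ Finset.univ.filter (fun j : Fin (c + 1) => j ≠ i ∧ j ≠ 0),
    ((d j : ℚ) / |(d j : ℚ) - (d i : ℚ)|)

open Finset in
private lemma piD_eq_aux {c : ℕ} (d : Fin (c + 1) → ℤ) (hmono : StrictMono d) (h0 : d 0 = 0)
    (i : Fin (c + 1)) :
    piD d i = (∏ j ∈ Finset.univ.erase 0, (d j : ℚ))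
      * (∏ j ∈ Finset.univ.erase i, |(d i : ℚ) - (d j : ℚ)|)⁻¹ := by
  set v : Fin (c+1) → ℚ := fun j => (d j : ℚ) with hvdef
  have hv : StrictMono v := fun a b h => by simp only [hvdef]; exact_mod_cast hmono h
  have hv0 : v 0 = 0 := by simp [hvdef, h0]
  have hvpos : ∀ j : Fin (c+1), j ≠ 0 → 0 < v j := fun j hj => by
    rw [← hv0]; exact hv (Fin.pos_of_ne_zero hj)
  have hfil : Finset.univ.filter (fun j : Fin (c + 1) => j ≠ i ∧ j ≠ 0)
      = (Finset.univ.erase i).erase 0 := by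
    ext j; simp [and_comm]
  have hstep : piD d i = (∏ j ∈ (Finset.univ.erase i).erase 0, v j)
      * (∏ j ∈ (Finset.univ.erase i).erase 0, |v i - v j|)⁻¹ := by
    rw [piD, hfil, ← Finset.prod_inv_distrib, ← Finset.prod_mul_distrib]
    exact Finset.prod_congr rfl fun j _ => by rw [div_eq_mul_inv, abs_sub_comm]
  rcases eq_or_ne i 0 with rfl | hi
  · rw [hstep, Finset.erase_idem]
  · have h0mem : (0 : Fin (c+1)) ∈ Finset.univ.erase i := by simp [hi.symm]
    have himem : i ∈ Finset.univ.erase 0 := by simp [hi]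
    have e1 : ∏ j ∈ Finset.univ.erase i, |v i - v j|
        = v i * ∏ j ∈ (Finset.univ.erase i).erase 0, |v i - v j| := by
      rw [← Finset.mul_prod_erase _ _ h0mem, hv0, sub_zero,
        abs_of_pos (hvpos i hi)]
    have e2 : ∏ j ∈ Finset.univ.erase 0, v j
        = v i * ∏ j ∈ (Finset.univ.erase i).erase 0, v j := by
      rw [← Finset.mul_prod_erase _ _ himem, Finset.erase_right_comm]
    have hb : (∏ j ∈ (Finset.univ.erase i).erase 0, |v i - v j|) ≠ 0 := by
      apply Finset.prod_ne_zero_iff.mpr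
      intro j hj
      have hji : j ≠ i := (Finset.mem_erase.mp (Finset.mem_erase.mp hj).2).1
      simp only [abs_ne_zero, sub_ne_zero]
      exact fun h => hji (hv.injective h.symm)
    rw [hstep, e1, e2, mul_inv]
    have hvi : v i ≠ 0 := (hvpos i hi).ne'
    field_simp

/-- For a degree sequence `D`, with `L(D)` the least positive integer making all
`L·π_i(D)` integers and `B_i(D) = L(D)·π_i(D)`, the sum of the `B_i(D)` with even
index equals the sum of those with odd index; consequently `∑ B_i(D)` is even. -/
theorem sum_even_B_eq_sum_odd_B
    (c : ℕ) (hc : 1 ≤ c) (d : Fin (c + 1) → ℤ)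
    (hmono : StrictMono d) (h0 : d 0 = 0)
    (L : ℕ)
    (hL : IsLeast {L' : ℕ | 0 < L' ∧ ∀ i : Fin (c + 1), ∃ n : ℤ,
      (L' : ℚ) * piD d i = n} L) :
    (∑ i ∈ Finset.univ.filter (fun i : Fin (c + 1) => Even (i : ℕ)),
        (L : ℚ) * piD d i)
      = ∑ i ∈ Finset.univ.filter (fun i : Fin (c + 1) => ¬ Even (i : ℕ)),
          (L : ℚ) * piD d i
    ∧ ∃ m : ℤ, ∑ i : Fin (c + 1), (L : ℚ) * piD d i = 2 * (m : ℚ) := by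
  have hv : StrictMono (fun j : Fin (c+1) => (d j : ℚ)) := fun a b h => by
    dsimp only; exact_mod_cast hmono h
  set P : ℚ := ∏ j ∈ Finset.univ.erase 0, (d j : ℚ) with hPdef
  have hterm : ∀ i : Fin (c+1), (-1:ℚ)^(i:ℕ) * piD d i
      = (-1)^c * P * (∏ j ∈ Finset.univ.erase i, ((d i : ℚ) - (d j : ℚ)))⁻¹ := by
    intro i
    rw [piD_eq_aux d hmono h0 i, sign_aux _ hv i, mul_inv]
    have hpow : ((-1:ℚ)^(c - (i:ℕ)))⁻¹ = (-1)^(c - (i:ℕ)) := by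
      rw [← inv_pow, inv_neg, inv_one]
    have hpow2 : (-1:ℚ)^c * (-1)^(c - (i:ℕ)) = (-1)^(i:ℕ) := by
      have hi : (i:ℕ) ≤ c := Nat.lt_succ_iff.mp i.isLt
      rw [← pow_add, show c + (c - (i:ℕ)) = (i:ℕ) + 2*(c - (i:ℕ)) by omega,
        pow_add, pow_mul, neg_one_sq, one_pow, mul_one]
    rw [hpow, ← hpow2]
    ring
  have hkey := key_aux hc (fun j : Fin (c+1) => (d j : ℚ)) hv.injective
  have hAlt : ∑ i : Fin (c+1), (-1:ℚ)^(i:ℕ) * ((L : ℚ) * piD d i) = 0 := by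
    have : ∑ i : Fin (c+1), (-1:ℚ)^(i:ℕ) * piD d i = 0 := by
      simp_rw [hterm]
      rw [← Finset.mul_sum, hkey, mul_zero]
    calc ∑ i : Fin (c+1), (-1:ℚ)^(i:ℕ) * ((L : ℚ) * piD d i)
        = (L : ℚ) * ∑ i : Fin (c+1), (-1:ℚ)^(i:ℕ) * piD d i := by
          rw [Finset.mul_sum]; exact Finset.sum_congr rfl fun i _ => by ring
      _ = 0 := by rw [this, mul_zero]
  have hsplit : ∀ (f : Fin (c+1) → ℚ),
      ∑ i : Fin (c+1), (-1:ℚ)^(i:ℕ) * f i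
        = (∑ i ∈ Finset.univ.filter (fun i : Fin (c+1) => Even (i:ℕ)), f i)
          - ∑ i ∈ Finset.univ.filter (fun i : Fin (c+1) => ¬ Even (i:ℕ)), f i := by
    intro f
    rw [← Finset.sum_filter_add_sum_filter_not Finset.univ
      (fun i : Fin (c+1) => Even (i:ℕ)) (fun i => (-1:ℚ)^(i:ℕ) * f i)]
    have h1 : ∑ i ∈ Finset.univ.filter (fun i : Fin (c+1) => Even (i:ℕ)),
        (-1:ℚ)^(i:ℕ) * f i
        = ∑ i ∈ Finset.univ.filter (fun i : Fin (c+1) => Even (i:ℕ)), f i := by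
      refine Finset.sum_congr rfl fun i hi => ?_
      rw [(Finset.mem_filter.mp hi).2.neg_one_pow, one_mul]
    have h2 : ∑ i ∈ Finset.univ.filter (fun i : Fin (c+1) => ¬ Even (i:ℕ)),
        (-1:ℚ)^(i:ℕ) * f i
        = - ∑ i ∈ Finset.univ.filter (fun i : Fin (c+1) => ¬ Even (i:ℕ)), f i := by
      rw [← Finset.sum_neg_distrib]
      refine Finset.sum_congr rfl fun i hi => ?_
      rw [(Nat.not_even_iff_odd.mp (Finset.mem_filter.mp hi).2).neg_one_pow,
        neg_one_mul]
    rw [h1, h2, sub_eq_add_neg]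
  have heq : (∑ i ∈ Finset.univ.filter (fun i : Fin (c + 1) => Even (i : ℕ)),
        (L : ℚ) * piD d i)
      = ∑ i ∈ Finset.univ.filter (fun i : Fin (c + 1) => ¬ Even (i : ℕ)),
          (L : ℚ) * piD d i := by
    have := hsplit (fun i => (L : ℚ) * piD d i)
    rw [hAlt] at this
    exact sub_eq_zero.mp this.symm
  refine ⟨heq, ?_⟩
  obtain ⟨-, hex⟩ := hL.1
  choose n hn using hex
  refine ⟨∑ i ∈ Finset.univ.filter (fun i : Fin (c+1) => ¬ Even (i:ℕ)), n i, ?_⟩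
  rw [← Finset.sum_filter_add_sum_filter_not Finset.univ
    (fun i : Fin (c+1) => Even (i:ℕ)) (fun i => (L : ℚ) * piD d i), heq, ← two_mul]
  congr 1
  rw [Finset.sum_congr rfl fun i _ => hn i]
  push_cast
  rfl
end

section
/- Let c ≥ 1 and let D = (0, d_1, ..., d_c) be a degree sequence. If B_1(D) = 2, then L(D) = 1, so that B_0(D) = 1 and B_i(D) = π_i(D) for every i; in particular every π_i(D) is an integer and π_1(D) = 2. -/
theorem piD_one_of_fin_two (d : Fin 2 → ℤ) : piD d 1 = 1 := by
  have hempty : Finset.univ.filter (fun j : Fin 2 => j ≠ 1 ∧ j ≠ 0) = ∅ := by decide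
  rw [piD, hempty, Finset.prod_empty]

section DegreeSequence

variable {c : ℕ} {d : Fin (c + 1) → ℤ}

theorem piD_zero (hmono : StrictMono d) (h0 : d 0 = 0) : piD d 0 = 1 := by
  refine Finset.prod_eq_one fun j hj => ?_
  have hj0 : (0 : Fin (c + 1)) < j := Fin.pos_iff_ne_zero.2 (Finset.mem_filter.1 hj).2.1
  have hdj : (0 : ℚ) < d j := by exact_mod_cast h0 ▸ hmono hj0
  rw [h0, Int.cast_zero, sub_zero, abs_of_pos hdj, div_self hdj.ne']

theorem one_lt_piD_one (hc : 2 ≤ c) (hmono : StrictMono d) (h0 : d 0 = 0) :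
    1 < piD d ⟨1, by omega⟩ := by
  set i1 : Fin (c + 1) := ⟨1, by omega⟩
  have hd1 : (0 : ℚ) < d i1 := by
    exact_mod_cast h0 ▸ hmono (show (0 : Fin (c + 1)) < i1 from Fin.mk_lt_mk.2 one_pos)
  have hfactor : ∀ j ∈ Finset.univ.filter (fun j : Fin (c + 1) => j ≠ i1 ∧ j ≠ 0),
      1 < (d j : ℚ) / |(d j : ℚ) - d i1| := by
    intro j hj
    obtain ⟨hj1, hj0⟩ := (Finset.mem_filter.1 hj).2
    have hlt : i1 < j := by
      rw [Fin.lt_def]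
      have := Fin.val_ne_of_ne hj1
      have := Fin.val_ne_of_ne hj0
      simp only [i1, Fin.val_zero] at *
      omega
    have hdj : (d i1 : ℚ) < d j := by exact_mod_cast hmono hlt
    rw [abs_of_pos (sub_pos.2 hdj), one_lt_div (sub_pos.2 hdj)]
    linarith
  have hne : (Finset.univ.filter (fun j : Fin (c + 1) => j ≠ i1 ∧ j ≠ 0)).Nonempty :=
    ⟨⟨2, by omega⟩, Finset.mem_filter.2 ⟨Finset.mem_univ _,
      Fin.ne_of_val_ne (by simp [i1]), Fin.ne_of_val_ne (by simp)⟩⟩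
  calc (1 : ℚ) = ∏ _j ∈ Finset.univ.filter (fun j : Fin (c + 1) => j ≠ i1 ∧ j ≠ 0), 1 :=
        Finset.prod_const_one.symm
    _ < piD d i1 := Finset.prod_lt_prod_of_nonempty (fun _ _ => one_pos) hfactor hne

end DegreeSequence

/-- If `B_1(D) = 2` for a degree sequence `D`, then `L(D) = 1`, so `B_0(D) = 1` and
`B_i(D) = π_i(D)` for every `i`; in particular every `π_i(D)` is an integer and
`π_1(D) = 2`. -/
theorem L_eq_one_of_B_one_eq_two
    (c : ℕ) (hc : 1 ≤ c) (d : Fin (c + 1) → ℤ)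
    (hmono : StrictMono d) (h0 : d 0 = 0)
    (L : ℕ)
    (hL : IsLeast {L' : ℕ | 0 < L' ∧ ∀ i : Fin (c + 1), ∃ n : ℤ,
      (L' : ℚ) * piD d i = n} L)
    (hB1 : (L : ℚ) * piD d ⟨1, by omega⟩ = 2) :
    L = 1 ∧ (∀ i : Fin (c + 1), ∃ n : ℤ, piD d i = n) ∧
      piD d ⟨1, by omega⟩ = 2 := by
  have hLpos : 0 < L := hL.1.1
  have hL1 : L = 1 := by
    obtain rfl | hc2 : c = 1 ∨ 2 ≤ c := by omega
    · have hmem : 1 ∈ {L' : ℕ | 0 < L' ∧ ∀ i : Fin 2, ∃ n : ℤ, (L' : ℚ) * piD d i = n} :=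
        ⟨one_pos, Fin.forall_fin_two.2
          ⟨⟨1, by simp [piD_zero hmono h0]⟩, ⟨1, by simp [piD_one_of_fin_two]⟩⟩⟩
      exact le_antisymm (hL.2 hmem) hLpos
    · have hLlt : (L : ℚ) < 2 :=
        hB1 ▸ lt_mul_of_one_lt_right (by exact_mod_cast hLpos) (one_lt_piD_one hc2 hmono h0)
      have : L < 2 := by exact_mod_cast hLlt
      omega
  subst hL1
  refine ⟨rfl, fun i => ?_, by simpa using hB1⟩
  simpa using hL.1.2 i
end

section
/- An integer triple (x, y, z) with z ≠ 0 satisfies 2(y − x)(z − x) = yz if and only if it is an integer multiple of a triple of one of the following two types: (Type 1) (b(2b − a), a(2b − a), 2b(b − a)) for some integers a, b with a odd and gcd(a, b) = 1; (Type 2) (b(b − A), 2A(b − A), b(b − 2A)) for some integers A, b with b odd and gcd(2A, b) = 1. -/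
/-!
Write `x = g b`, `y = g a` with `g = gcd(x, y)`. Cancelling `g`, the equation becomes
`z (a - 2b) = 2 g b (a - b)`, and since `a - 2b` is coprime to `b (a - b)` it divides `2g`.
If `a` is odd, `a - 2b` is odd and already divides `g`, which gives Type 1; if `a = 2A`, then
`A - b` divides `g` and `b` is odd, which gives Type 2.
-/

theorem IsCoprime.sub_two_mul_mul_sub {R : Type*} [CommRing R] {a b : R} (h : IsCoprime a b) :
    IsCoprime (a - 2 * b) (b * (a - b)) := by
  obtain ⟨u, v, huv⟩ := h
  exact IsCoprime.mul_right ⟨u, v + 2 * u, by linear_combination huv⟩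
    ⟨-u - v, 2 * u + v, by linear_combination huv⟩

namespace Int

variable {a b g z : ℤ}

theorem sub_two_mul_dvd_two_mul (hab : IsCoprime a b)
    (h : z * (a - 2 * b) = 2 * g * b * (a - b)) : a - 2 * b ∣ 2 * g :=
  hab.sub_two_mul_mul_sub.dvd_of_dvd_mul_right ⟨z, by linear_combination -h⟩

theorem exists_typeOne_of_odd (hab : IsCoprime a b) (ha : Odd a) (hg : g ≠ 0)
    (h : z * (a - 2 * b) = 2 * g * b * (a - b)) :
    ∃ k, b * g = k * (b * (2 * b - a)) ∧ a * g = k * (a * (2 * b - a)) ∧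
      z = k * (2 * b * (b - a)) := by
  have hodd : Odd (a - 2 * b) := ha.sub_even (even_two_mul b)
  obtain ⟨m, rfl⟩ : a - 2 * b ∣ g :=
    (isCoprime_two_right.mpr hodd).dvd_of_dvd_mul_left (sub_two_mul_dvd_two_mul hab h)
  have hd : a - 2 * b ≠ 0 := left_ne_zero_of_mul hg
  exact ⟨-m, by ring, by ring, mul_right_cancel₀ hd (by linear_combination h)⟩

theorem exists_typeTwo_of_even {A : ℤ} (hab : IsCoprime (2 * A) b) (hg : g ≠ 0)
    (h : z * (2 * A - 2 * b) = 2 * g * b * (2 * A - b)) :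
    ∃ k, b * g = k * (b * (b - A)) ∧ 2 * A * g = k * (2 * A * (b - A)) ∧
      z = k * (b * (b - 2 * A)) := by
  obtain ⟨m, rfl⟩ : A - b ∣ g := by
    have h2 := sub_two_mul_dvd_two_mul hab h
    rwa [← mul_sub, mul_dvd_mul_iff_left two_ne_zero] at h2
  have hd : 2 * (A - b) ≠ 0 := mul_ne_zero two_ne_zero (left_ne_zero_of_mul hg)
  exact ⟨-m, by ring, by ring, mul_right_cancel₀ hd (by linear_combination h)⟩

theorem odd_of_isCoprime_two_mul {A : ℤ} (h : IsCoprime (2 * A) b) : Odd b :=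
  isCoprime_two_left.mp h.of_mul_left_left

end Int

theorem integer_solutions_two_pi_one_general
    (x y z : ℤ) :
    2 * (y - x) * (z - x) = y * z ↔
      (∃ k a b : ℤ, Odd a ∧ Int.gcd a b = 1 ∧
        x = k * (b * (2 * b - a)) ∧
        y = k * (a * (2 * b - a)) ∧
        z = k * (2 * b * (b - a))) ∨
      (∃ k A b : ℤ, Odd b ∧ Int.gcd (2 * A) b = 1 ∧
        x = k * (b * (b - A)) ∧
        y = k * (2 * A * (b - A)) ∧
        z = k * (b * (b - 2 * A))) := by
  refine ⟨fun h => ?_, ?_⟩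
  · rcases Nat.eq_zero_or_pos (Int.gcd x y) with h0 | h0
    · obtain ⟨rfl, rfl⟩ := Int.gcd_eq_zero_iff.mp h0
      exact Or.inr ⟨-z, 1, 1, odd_one, rfl, by ring, by ring, by ring⟩
    obtain ⟨g, b, a, hg, hab, rfl, rfl⟩ := Int.exists_gcd_one' h0
    rw [Int.gcd_comm] at hab
    have hg0 : (g : ℤ) ≠ 0 := by exact_mod_cast hg.ne'
    have hred : z * (a - 2 * b) = 2 * g * b * (a - b) :=
      mul_left_cancel₀ hg0 (by linear_combination h)
    have hcop := Int.isCoprime_iff_gcd_eq_one.mpr hab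
    obtain ⟨A, rfl | rfl⟩ := Int.even_or_odd' a
    · obtain ⟨k, hx, hy, hz⟩ := Int.exists_typeTwo_of_even hcop hg0 hred
      exact Or.inr ⟨k, A, b, Int.odd_of_isCoprime_two_mul hcop, hab, hx, hy, hz⟩
    · obtain ⟨k, hx, hy, hz⟩ := Int.exists_typeOne_of_odd hcop ⟨A, rfl⟩ hg0 hred
      exact Or.inl ⟨k, _, b, ⟨A, rfl⟩, hab, hx, hy, hz⟩
  · rintro (⟨k, a, b, -, -, rfl, rfl, rfl⟩ | ⟨k, A, b, -, -, rfl, rfl, rfl⟩) <;> ring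

/-- Classification of the integer solutions `(x, y, z)` with `z ≠ 0` of the
homogeneous equation `2(y − x)(z − x) = yz`: they are exactly the integer
multiples of the triples of Type 1, `(b(2b − a), a(2b − a), 2b(b − a))` with `a`
odd and `gcd(a, b) = 1`, and of Type 2, `(b(b − A), 2A(b − A), b(b − 2A))` with
`b` odd and `gcd(2A, b) = 1`. -/
theorem integer_solutions_two_pi_one
    (x y z : ℤ) (hz : z ≠ 0) :
    2 * (y - x) * (z - x) = y * z ↔
      (∃ k a b : ℤ, Odd a ∧ Int.gcd a b = 1 ∧
        x = k * (b * (2 * b - a)) ∧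
        y = k * (a * (2 * b - a)) ∧
        z = k * (2 * b * (b - a))) ∨
      (∃ k A b : ℤ, Odd b ∧ Int.gcd (2 * A) b = 1 ∧
        x = k * (b * (b - A)) ∧
        y = k * (2 * A * (b - A)) ∧
        z = k * (b * (b - 2 * A))) :=
  integer_solutions_two_pi_one_general x y z
end

section
/- Let x, y, z be integers with 0 < x < y < z and gcd(x, y, z) = 1. If 2(y − x)(z − x) = yz and (y − x)(z − y) divides xz (i.e. xz/((y − x)(z − y)) is an integer), then z = y + 1. -/
/-! The relation `2(y − x)(z − x) = yz` rewrites as `(y − 2x)(z − 2x) = 2x²`, and the integrality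
of `π_2` makes `z − y` divide both factors on the left. A common divisor of `z − y` and `x` then
divides `x`, `y` and `z`, so `z − y` is coprime to `x` and `(z − y)² ∣ 2`, forcing `z − y = 1`. -/

lemma isCoprime_of_dvd_sub_mul_of_dvd_sub_mul {d x y z a b : ℤ}
    (hgcd : Int.gcd x (Int.gcd y z) = 1) (hy : d ∣ y - a * x) (hz : d ∣ z - b * x) :
    IsCoprime d x := by
  rw [Int.isCoprime_iff_gcd_eq_one]
  have hgd : (Int.gcd d x : ℤ) ∣ d := Int.gcd_dvd_left _ _
  have hgx : (Int.gcd d x : ℤ) ∣ x := Int.gcd_dvd_right _ _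
  have hgy : (Int.gcd d x : ℤ) ∣ y := by
    simpa using (hgd.trans hy).add (hgx.mul_left a)
  have hgz : (Int.gcd d x : ℤ) ∣ z := by
    simpa using (hgd.trans hz).add (hgx.mul_left b)
  have hg1 : (Int.gcd d x : ℤ) ∣ 1 := by
    simpa [hgcd] using Int.dvd_coe_gcd hgx (Int.dvd_coe_gcd hgy hgz)
  exact_mod_cast Int.eq_one_of_dvd_one (Int.natCast_nonneg _) hg1

lemma sq_dvd_of_isCoprime_of_sq_dvd_mul_sq {R : Type*} [CommSemiring R] {d x c : R} (hco : IsCoprime d x)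
    (h : d ^ 2 ∣ c * x ^ 2) : d ^ 2 ∣ c :=
  (hco.pow (m := 2) (n := 2)).dvd_of_dvd_mul_right h

lemma Int.eq_one_of_pos_of_sq_dvd_two {d : ℤ} (hd : 0 < d) (h : d ^ 2 ∣ 2) : d = 1 := by
  have := Int.le_of_dvd two_pos h
  nlinarith

theorem z_eq_y_add_one_of_pi_one_eq_two_general
    (x y z : ℤ) (hxy : x < y) (hyz : y < z)
    (hgcd : Int.gcd x (Int.gcd y z) = 1)
    (heq : 2 * (y - x) * (z - x) = y * z)
    (hdvd : (y - x) * (z - y) ∣ x * z) :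
    z = y + 1 := by
  have hkey : (y - 2 * x) * (z - 2 * x) = 2 * x ^ 2 := by linear_combination heq
  have hz : z - y ∣ z - 2 * x := by
    have hxz : x * z = (z - 2 * x) * (y - x) := by linear_combination -heq
    rw [hxz, mul_comm] at hdvd
    exact (mul_dvd_mul_iff_right (sub_ne_zero.2 hxy.ne')).mp hdvd
  have hy : z - y ∣ y - 2 * x := by
    simpa using hz.sub (dvd_refl (z - y))
  have hsq : (z - y) ^ 2 ∣ 2 * x ^ 2 := hkey ▸ sq (z - y) ▸ mul_dvd_mul hy hz
  have hco := isCoprime_of_dvd_sub_mul_of_dvd_sub_mul hgcd hy hz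
  have hzy := Int.eq_one_of_pos_of_sq_dvd_two (sub_pos.2 hyz)
    (sq_dvd_of_isCoprime_of_sq_dvd_mul_sq hco hsq)
  linarith

/-- If `0 < x < y < z`, `gcd(x, y, z) = 1`, `2(y − x)(z − x) = yz` (i.e. `π_1 = 2`
for the degree sequence `(0, x, y, z)`), and `(y − x)(z − y)` divides `xz`
(i.e. `π_2` is an integer), then `z = y + 1`. -/
theorem z_eq_y_add_one_of_pi_one_eq_two
    (x y z : ℤ) (hx : 0 < x) (hxy : x < y) (hyz : y < z)
    (hgcd : Int.gcd x (Int.gcd y z) = 1)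
    (heq : 2 * (y - x) * (z - x) = y * z)
    (hdvd : (y - x) * (z - y) ∣ x * z) :
    z = y + 1 :=
  z_eq_y_add_one_of_pi_one_eq_two_general x y z hxy hyz hgcd heq hdvd
end

section
/- Define integer sequences (x_n), (y_n) by x_0 = y_0 = 0 and x_{n+1} = −x_n + 2y_n + 1, y_{n+1} = −4x_n + 7y_n + 3. Let x, y, z be integers with 0 < x < y < z and gcd(x, y, z) = 1, and let D = (0, x, y, z). Then B_1(D) = 2 if and only if there exists n ≥ 1 with (x, y, z) = (x_n, y_n, y_n + 1). -/
/-- The recursively defined pair sequence `(x_n, y_n)`: `x_0 = y_0 = 0`,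
`x_{n+1} = −x_n + 2y_n + 1`, `y_{n+1} = −4x_n + 7y_n + 3`. -/
def pellSeq : ℕ → ℤ × ℤ
  | 0 => (0, 0)
  | n + 1 => (-(pellSeq n).1 + 2 * (pellSeq n).2 + 1,
              -4 * (pellSeq n).1 + 7 * (pellSeq n).2 + 3)

/-- `π_1` of the codimension-3 degree sequence `(0, x, y, z)`. -/
noncomputable def piOne (x y z : ℤ) : ℚ := ((y * z : ℤ) : ℚ) / (((y - x) * (z - x) : ℤ) : ℚ)

/-- `π_2` of the codimension-3 degree sequence `(0, x, y, z)`. -/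
noncomputable def piTwo (x y z : ℤ) : ℚ := ((x * z : ℤ) : ℚ) / (((y - x) * (z - y) : ℤ) : ℚ)

/-- `π_3` of the codimension-3 degree sequence `(0, x, y, z)`. -/
noncomputable def piThree (x y z : ℤ) : ℚ := ((x * y : ℤ) : ℚ) / (((z - x) * (z - y) : ℤ) : ℚ)

/-!
For `z = y + 1` the condition `π_1 = 2` reads `y(y + 1) = 2(y − x)(y − x + 1)`, a negative Pell
equation `u² − 2w² = −1` in `u = 2y + 1`, `w = 2(y − x) + 1`; `pellSeq` runs through its positive
solutions by the unit `3 + 2√2`, and the inverse step is a descent ending at `(1, 3)`. On these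
solutions `π_2 = y − 2x + 1` and `π_3 = y − 2x`, so `L = 1`.

Conversely `B_1 = 2` forces `L = 1` since `π_1 > 1`. Then `π_1 = 2` gives `yz = 2x(y + z − x)`, so
a common divisor of `z − y` and `x` divides `y²` and is coprime to `y`, while
`π_2 π_3 = 2x² / (z − y)²`: hence `(z − y)² ∣ 2` and `z = y + 1`.
-/

theorem pellSeq_snd_mul_succ (n : ℕ) :
    (pellSeq n).2 * ((pellSeq n).2 + 1) =
      2 * (((pellSeq n).2 - (pellSeq n).1) * ((pellSeq n).2 - (pellSeq n).1 + 1)) := by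
  induction n with
  | zero => rfl
  | succ n ih => simp only [pellSeq]; linear_combination ih

-- `(7x − 2y − 1, 4x − y − 1)` is the preimage of `(x, y)` under the step of `pellSeq`.
theorem pell_descent {x y : ℤ} (hx : 0 < x) (hxy : x < y)
    (h : y * (y + 1) = 2 * ((y - x) * (y - x + 1))) :
    x = 1 ∧ y = 3 ∨
      0 < 7 * x - 2 * y - 1 ∧ 7 * x - 2 * y - 1 < 4 * x - y - 1 ∧ 4 * x - y - 1 < y := by
  have h2x : 2 * x ≤ y := by nlinarith
  have h3x : 3 * x ≤ y := by nlinarith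
  have h7x : 2 * y + 1 ≤ 7 * x := by nlinarith
  by_cases h13 : x = 1 ∧ y = 3
  · exact .inl h13
  refine .inr ⟨?_, ?_, by omega⟩
  · refine sub_pos.2 (lt_of_le_of_ne (by omega) fun h7 => h13 ?_)
    have : x ^ 2 = 1 := by nlinarith
    constructor <;> nlinarith
  · refine sub_lt_sub_right (lt_of_le_of_ne (by omega) fun h3 => h13 ?_) 1
    constructor <;> nlinarith

theorem exists_pellSeq_eq {x y : ℤ} (hx : 0 < x) (hxy : x < y)
    (h : y * (y + 1) = 2 * ((y - x) * (y - x + 1))) :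
    ∃ n, 1 ≤ n ∧ pellSeq n = (x, y) := by
  rcases pell_descent hx hxy h with ⟨rfl, rfl⟩ | ⟨hx₀, hx₀y₀, hy₀y⟩
  · exact ⟨1, le_rfl, rfl⟩
  · obtain ⟨n, -, hn⟩ := exists_pellSeq_eq hx₀ hx₀y₀ (by linear_combination h)
    refine ⟨n + 1, by omega, ?_⟩
    rw [pellSeq, hn]
    ext <;> ring
termination_by y.toNat
decreasing_by omega

theorem Int.isUnit_of_dvd_of_gcd_gcd_eq_one {x y z k : ℤ} (hgcd : Int.gcd x (Int.gcd y z) = 1)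
    (hx : k ∣ x) (hy : k ∣ y) (hz : k ∣ z) : IsUnit k :=
  isUnit_of_dvd_one <| by simpa [hgcd] using Int.dvd_coe_gcd hx (Int.dvd_coe_gcd hy hz)

theorem isRelPrime_sub_of_mul_eq {x y z : ℤ} (hgcd : Int.gcd x (Int.gcd y z) = 1)
    (h : y * z = 2 * x * (y + z - x)) : IsRelPrime (z - y) x := by
  intro k hkd hkx
  have hky : IsRelPrime k y := fun j hjk hjy =>
    Int.isUnit_of_dvd_of_gcd_gcd_eq_one hgcd (hjk.trans hkx) hjy
      (by simpa using dvd_add hjy (hjk.trans hkd))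
  refine (hky.pow_right (n := 2)).isUnit_of_dvd ?_
  have : y ^ 2 = 2 * x * (y + z - x) - y * (z - y) := by linear_combination h
  rw [this]
  exact dvd_sub ((hkx.mul_left 2).mul_right _) (hkd.mul_left y)

theorem sq_sub_dvd_two_mul_sq {x y z : ℤ} (hxy : x ≠ y) (hxz : x ≠ z)
    (h1 : y * z = 2 * ((y - x) * (z - x))) (h2 : (y - x) * (z - y) ∣ x * z)
    (h3 : (z - x) * (z - y) ∣ x * y) : (z - y) ^ 2 ∣ 2 * x ^ 2 := by
  have hne : (y - x) * (z - x) ≠ 0 := mul_ne_zero (sub_ne_zero.2 hxy.symm) (sub_ne_zero.2 hxz.symm)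
  have := mul_dvd_mul h2 h3
  rwa [show (y - x) * (z - y) * ((z - x) * (z - y)) = (y - x) * (z - x) * (z - y) ^ 2 by ring,
    show x * z * (x * y) = (y - x) * (z - x) * (2 * x ^ 2) by linear_combination x ^ 2 * h1,
    mul_dvd_mul_iff_left hne] at this

theorem sub_eq_one_of_mul_eq_two_mul {x y z : ℤ} (hxy : x < y) (hyz : y < z)
    (hgcd : Int.gcd x (Int.gcd y z) = 1) (h1 : y * z = 2 * ((y - x) * (z - x)))
    (h2 : (y - x) * (z - y) ∣ x * z) (h3 : (z - x) * (z - y) ∣ x * y) : z - y = 1 := by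
  have hcop : IsCoprime ((z - y) ^ 2) (x ^ 2) :=
    (isRelPrime_iff_isCoprime.1 (isRelPrime_sub_of_mul_eq hgcd (by linear_combination -h1))).pow
  have hdvd : (z - y) ^ 2 ∣ 2 :=
    hcop.dvd_of_dvd_mul_right (sq_sub_dvd_two_mul_sq hxy.ne (by omega) h1 h2 h3)
  have := Int.le_of_dvd two_pos hdvd
  nlinarith

theorem intCast_div_intCast_eq_intCast_iff {a b n : ℤ} (hb : b ≠ 0) :
    (a : ℚ) / b = n ↔ a = n * b := by
  rw [div_eq_iff (Int.cast_ne_zero.2 hb)]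
  norm_cast

theorem exists_intCast_div_intCast_eq_iff_dvd {a b : ℤ} (hb : b ≠ 0) :
    (∃ n : ℤ, (a : ℚ) / b = n) ↔ b ∣ a := by
  simp_rw [intCast_div_intCast_eq_intCast_iff hb, dvd_iff_exists_eq_mul_left]

theorem piOne_eq_two_iff {x y z : ℤ} (hxy : x ≠ y) (hxz : x ≠ z) :
    piOne x y z = 2 ↔ y * z = 2 * ((y - x) * (z - x)) := by
  rw [piOne, ← Int.cast_ofNat, intCast_div_intCast_eq_intCast_iff
    (mul_ne_zero (sub_ne_zero.2 hxy.symm) (sub_ne_zero.2 hxz.symm))]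

theorem one_lt_piOne {x y z : ℤ} (hx : 0 < x) (hxy : x < y) (hxz : x < z) :
    1 < piOne x y z := by
  have hden : 0 < (y - x) * (z - x) := mul_pos (sub_pos.2 hxy) (sub_pos.2 hxz)
  rw [piOne, one_lt_div (by exact_mod_cast hden)]
  exact_mod_cast (show (y - x) * (z - x) < y * z by nlinarith)

theorem one_mem_iff_dvd {x y z : ℤ} (hxy : x ≠ y) (hxz : x ≠ z) (hyz : y ≠ z) :
    1 ∈ {L' : ℕ | 0 < L' ∧
      (∃ n : ℤ, (L' : ℚ) * piOne x y z = n) ∧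
      (∃ n : ℤ, (L' : ℚ) * piTwo x y z = n) ∧
      (∃ n : ℤ, (L' : ℚ) * piThree x y z = n)} ↔
      (y - x) * (z - x) ∣ y * z ∧ (y - x) * (z - y) ∣ x * z ∧ (z - x) * (z - y) ∣ x * y := by
  have hxy' := sub_ne_zero.2 hxy.symm
  have hxz' := sub_ne_zero.2 hxz.symm
  have hyz' := sub_ne_zero.2 hyz.symm
  simp only [Set.mem_ofPred_eq, Nat.cast_one, one_mul, Nat.one_pos, true_and, piOne, piTwo,
    piThree, exists_intCast_div_intCast_eq_iff_dvd (mul_ne_zero hxy' hxz'),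
    exists_intCast_div_intCast_eq_iff_dvd (mul_ne_zero hxy' hyz'),
    exists_intCast_div_intCast_eq_iff_dvd (mul_ne_zero hxz' hyz')]

theorem Nat.eq_one_of_mul_eq_two {L : ℕ} {q : ℚ} (hL : 0 < L) (hq : 1 < q) (h : L * q = 2) :
    L = 1 := by
  have : (L : ℚ) < 2 := by nlinarith
  have : L < 2 := by exact_mod_cast this
  omega

/-- A nondegenerate codimension-3 degree sequence `D = (0, x, y, z)` has
`B_1(D) = 2` if and only if `(x, y, z) = (x_n, y_n, y_n + 1)` for some `n ≥ 1`,
where `(x_n, y_n)` is the recursive sequence `pellSeq`. -/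
theorem B_one_eq_two_iff_pellSeq
    (x y z : ℤ) (hx : 0 < x) (hxy : x < y) (hyz : y < z)
    (hgcd : Int.gcd x (Int.gcd y z) = 1)
    (L : ℕ)
    (hL : IsLeast {L' : ℕ | 0 < L' ∧
      (∃ n : ℤ, (L' : ℚ) * piOne x y z = n) ∧
      (∃ n : ℤ, (L' : ℚ) * piTwo x y z = n) ∧
      (∃ n : ℤ, (L' : ℚ) * piThree x y z = n)} L) :
    (L : ℚ) * piOne x y z = 2 ↔
      ∃ n : ℕ, 1 ≤ n ∧ x = (pellSeq n).1 ∧ y = (pellSeq n).2 ∧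
        z = (pellSeq n).2 + 1 := by
  have hxz : x < z := hxy.trans hyz
  constructor
  · intro hB
    have hL₁ : L = 1 := Nat.eq_one_of_mul_eq_two hL.1.1 (one_lt_piOne hx hxy hxz) hB
    have hmem := hL.1
    rw [hL₁, one_mem_iff_dvd hxy.ne hxz.ne hyz.ne] at hmem
    rw [hL₁, Nat.cast_one, one_mul, piOne_eq_two_iff hxy.ne hxz.ne] at hB
    obtain rfl : z = y + 1 := by
      linarith [sub_eq_one_of_mul_eq_two_mul hxy hyz hgcd hB hmem.2.1 hmem.2.2]
    obtain ⟨n, hn, hseq⟩ := exists_pellSeq_eq hx hxy (by linear_combination hB)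
    exact ⟨n, hn, by simp [hseq]⟩
  · rintro ⟨n, -, hxn, hyn, hzn⟩
    obtain rfl : z = y + 1 := by rw [hzn, hyn]
    have h : y * (y + 1) = 2 * ((y - x) * (y - x + 1)) := by
      rw [hxn, hyn]; exact pellSeq_snd_mul_succ n
    have hL₁ : L = 1 := le_antisymm (hL.2 ((one_mem_iff_dvd hxy.ne hxz.ne hyz.ne).2
      ⟨⟨2, by linear_combination h⟩, ⟨y - 2 * x + 1, by linear_combination h⟩,
        ⟨y - 2 * x, by linear_combination h⟩⟩)) hL.1.1
    rw [hL₁, Nat.cast_one, one_mul, piOne_eq_two_iff hxy.ne hxz.ne]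
    linear_combination h
end

section
/- Define integer sequences (x_n), (y_n) by x_0 = y_0 = 0 and x_{n+1} = −x_n + 2y_n + 1, y_{n+1} = −4x_n + 7y_n + 3. For every n ≥ 1 one has 0 < x_n < y_n, and for the degree sequence D = (0, x_n, y_n, y_n + 1) all π_i(D) are integers and B(D) = (π_0(D), π_1(D), π_2(D), π_3(D)) = (1, 2, y_n − 2x_n + 1, y_n − 2x_n). -/
lemma pell_inv (n : ℕ) : 0 ≤ (pellSeq n).1 ∧ (pellSeq n).1 ≤ (pellSeq n).2 ∧
    (pellSeq n).2 ^ 2 - 4 * (pellSeq n).1 * (pellSeq n).2 + 2 * (pellSeq n).1 ^ 2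
      + (pellSeq n).2 - 2 * (pellSeq n).1 = 0 := by
  induction n with
  | zero => simp [pellSeq]
  | succ k ih =>
    obtain ⟨h1, h2, h3⟩ := ih
    refine ⟨?_, ?_, ?_⟩
    · simp only [pellSeq]; linarith
    · simp only [pellSeq]; linarith
    · simp only [pellSeq]; linear_combination h3

/-- For every `n ≥ 1` one has `0 < x_n < y_n`, and for the degree sequence
`D = (0, x_n, y_n, y_n + 1)` all `π_i(D)` are integers (so `L(D) = 1`) and
`B(D) = (1, 2, y_n − 2x_n + 1, y_n − 2x_n)`. -/
theorem B_of_pellSeq_degree_sequence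
    (n : ℕ) (hn : 1 ≤ n) :
    0 < (pellSeq n).1 ∧ (pellSeq n).1 < (pellSeq n).2 ∧
    IsLeast {L' : ℕ | 0 < L' ∧
      (∃ m : ℤ, (L' : ℚ) * piOne (pellSeq n).1 (pellSeq n).2 ((pellSeq n).2 + 1) = m) ∧
      (∃ m : ℤ, (L' : ℚ) * piTwo (pellSeq n).1 (pellSeq n).2 ((pellSeq n).2 + 1) = m) ∧
      (∃ m : ℤ, (L' : ℚ) * piThree (pellSeq n).1 (pellSeq n).2 ((pellSeq n).2 + 1) = m)} 1 ∧
    piOne (pellSeq n).1 (pellSeq n).2 ((pellSeq n).2 + 1) = 2 ∧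
    piTwo (pellSeq n).1 (pellSeq n).2 ((pellSeq n).2 + 1)
      = (((pellSeq n).2 - 2 * (pellSeq n).1 + 1 : ℤ) : ℚ) ∧
    piThree (pellSeq n).1 (pellSeq n).2 ((pellSeq n).2 + 1)
      = (((pellSeq n).2 - 2 * (pellSeq n).1 : ℤ) : ℚ) := by
  obtain ⟨k, rfl⟩ : ∃ k, n = k + 1 := ⟨n - 1, (Nat.succ_pred_eq_of_pos hn).symm⟩
  obtain ⟨h1, h2, _⟩ := pell_inv k
  obtain ⟨hx0, hxy, hinv⟩ := pell_inv (k + 1)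
  set x := (pellSeq (k + 1)).1 with hx
  set y := (pellSeq (k + 1)).2 with hy
  have hxpos : 0 < x := by
    rw [hx]; simp only [pellSeq]; linarith
  have hxylt : x < y := by
    rw [hx, hy]; simp only [pellSeq]; linarith
  have hd1 : (((y - x : ℤ) : ℚ)) ≠ 0 := by
    exact_mod_cast sub_ne_zero.mpr (ne_of_gt hxylt)
  have hd2 : ((((y + 1) - x : ℤ) : ℚ)) ≠ 0 := by
    have : x < y + 1 := by linarith
    exact_mod_cast sub_ne_zero.mpr (ne_of_gt this)
  have hinvQ : ((y : ℚ)) ^ 2 - 4 * x * y + 2 * x ^ 2 + y - 2 * x = 0 := by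
    exact_mod_cast congrArg (fun t : ℤ => (t : ℚ)) hinv
  have hp1 : piOne x y (y + 1) = 2 := by
    rw [piOne]
    rw [div_eq_iff (by push_cast at hd1 hd2 ⊢; exact mul_ne_zero hd1 hd2)]
    push_cast
    linear_combination -hinvQ
  have hp2 : piTwo x y (y + 1) = ((y - 2 * x + 1 : ℤ) : ℚ) := by
    rw [piTwo]
    rw [div_eq_iff (by push_cast at hd1 ⊢; simpa using hd1)]
    push_cast
    linear_combination -hinvQ
  have hp3 : piThree x y (y + 1) = ((y - 2 * x : ℤ) : ℚ) := by
    rw [piThree]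
    rw [div_eq_iff (by push_cast at hd2 ⊢; simpa using hd2)]
    push_cast
    linear_combination -hinvQ
  refine ⟨hxpos, hxylt, ⟨⟨one_pos, ⟨2, by rw [hp1]; norm_num⟩,
    ⟨y - 2 * x + 1, by rw [hp2]; norm_num⟩, ⟨y - 2 * x, by rw [hp3]; norm_num⟩⟩,
    fun L' hL' => hL'.1⟩, hp1, hp2, hp3⟩
end

section
/- Let c ≥ 3, let i be an index with 1 ≤ i ≤ c − 1, and let L, α be positive integers. Let m_1, ..., m_{c−1} be pairwise distinct nonzero rational numbers. Suppose t is a nonzero real number such that the point (x_1, ..., x_c) = (m_1 t, m_2 t, ..., m_{c−1} t, 1) satisfies L · x_1 ⋯ x_{i−1} x_{i+1} ⋯ x_c = α · (x_i − x_1) ⋯ (x_i − x_{i−1}) · (x_{i+1} − x_i) ⋯ (x_c − x_i). Then t is rational. Consequently, every point of the hypersurface defined by this equation that lies on a line through the origin with rational direction has rational coordinates. -/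
/-- Let `c ≥ 3`, `1 ≤ i ≤ c − 1`, and let `L, α` be positive integers. Let
`m_1, …, m_{c−1}` be pairwise distinct nonzero rationals. If a nonzero real `t`
is such that the point `(x_1, …, x_c) = (m_1 t, …, m_{c−1} t, 1)` satisfies the
Herzog–Kühl type equation
`L·x_1⋯x̂_i⋯x_c = α·∏_{j<i}(x_i − x_j)·∏_{j>i}(x_j − x_i)`,
then `t` is rational. -/
theorem param_point_on_hypersurface_is_rational
    (c : ℕ) (hc : 3 ≤ c) (i : ℕ) (hi1 : 1 ≤ i) (hi2 : i ≤ c - 1)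
    (L α : ℕ) (hL : 0 < L) (hα : 0 < α)
    (m : ℕ → ℚ)
    (hm0 : ∀ j ∈ Finset.Icc 1 (c - 1), m j ≠ 0)
    (hmdist : ∀ j ∈ Finset.Icc 1 (c - 1), ∀ k ∈ Finset.Icc 1 (c - 1),
      j ≠ k → m j ≠ m k)
    (t : ℝ) (ht : t ≠ 0)
    (x : ℕ → ℝ)
    (hx : ∀ j ∈ Finset.Icc 1 (c - 1), x j = (m j : ℝ) * t)
    (hxc : x c = 1)
    (heq : (L : ℝ) * ∏ j ∈ (Finset.Icc 1 c).erase i, x j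
      = (α : ℝ) * ((∏ j ∈ Finset.Icc 1 (i - 1), (x i - x j)) *
          ∏ j ∈ Finset.Icc (i + 1) c, (x j - x i))) :
    ∃ q : ℚ, t = (q : ℝ) := by
  have hiI : i ∈ Finset.Icc 1 (c - 1) := Finset.mem_Icc.mpr ⟨hi1, hi2⟩
  -- constants
  set P : ℚ := ∏ j ∈ (Finset.Icc 1 (c - 1)).erase i, m j with hPdef
  set A : ℚ := ∏ j ∈ Finset.Icc 1 (i - 1), (m i - m j) with hAdef
  set B : ℚ := ∏ j ∈ Finset.Icc (i + 1) (c - 1), (m j - m i) with hBdef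
  have hP : P ≠ 0 := by
    rw [hPdef]
    exact Finset.prod_ne_zero_iff.mpr fun j hj => hm0 j (Finset.mem_of_mem_erase hj)
  have hA : A ≠ 0 := by
    rw [hAdef]
    refine Finset.prod_ne_zero_iff.mpr fun j hj => sub_ne_zero.mpr ?_
    have hj' := Finset.mem_Icc.mp hj
    exact hmdist i hiI j (Finset.mem_Icc.mpr ⟨hj'.1, by omega⟩) (by omega)
  have hB : B ≠ 0 := by
    rw [hBdef]
    refine Finset.prod_ne_zero_iff.mpr fun j hj => sub_ne_zero.mpr ?_
    have hj' := Finset.mem_Icc.mp hj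
    exact hmdist j (Finset.mem_Icc.mpr ⟨by omega, hj'.2⟩) i hiI (by omega)
  have hmi : m i ≠ 0 := hm0 i hiI
  -- rewrite the three products
  have hicc : Finset.Icc 1 c = insert c (Finset.Icc 1 (c - 1)) := by
    have h : c = (c - 1) + 1 := by omega
    rw [h]
    exact (Finset.insert_Icc_right_eq_Icc_add_one (by omega)).symm
  have hcnot : c ∉ Finset.Icc 1 (c - 1) := by
    simp only [Finset.mem_Icc]; omega
  have h1 : ∏ j ∈ (Finset.Icc 1 c).erase i, x j = (P : ℝ) * t ^ (c - 2) := by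
    rw [hicc, Finset.erase_insert_of_ne (by omega : c ≠ i), Finset.prod_insert
      (fun h => hcnot (Finset.mem_of_mem_erase h)), hxc, one_mul]
    rw [Finset.prod_congr rfl (fun j hj => hx j (Finset.mem_of_mem_erase hj)),
      Finset.prod_mul_distrib, Finset.prod_const, Finset.card_erase_of_mem hiI,
      Nat.card_Icc, show c - 1 + 1 - 1 - 1 = c - 2 from by omega, hPdef]
    push_cast
    ring
  have h2 : ∏ j ∈ Finset.Icc 1 (i - 1), (x i - x j) = (A : ℝ) * t ^ (i - 1) := by
    have : ∀ j ∈ Finset.Icc 1 (i - 1), x i - x j = ((m i - m j : ℚ) : ℝ) * t := by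
      intro j hj
      have hj' := Finset.mem_Icc.mp hj
      rw [hx i hiI, hx j (Finset.mem_Icc.mpr ⟨hj'.1, by omega⟩)]
      push_cast; ring
    rw [Finset.prod_congr rfl this, Finset.prod_mul_distrib, Finset.prod_const,
      Nat.card_Icc, show i - 1 + 1 - 1 = i - 1 from by omega, hAdef]
    push_cast
    ring
  have hicc2 : Finset.Icc (i + 1) c = insert c (Finset.Icc (i + 1) (c - 1)) := by
    have h : c = (c - 1) + 1 := by omega
    rw [h]
    exact (Finset.insert_Icc_right_eq_Icc_add_one (by omega)).symm
  have h3 : ∏ j ∈ Finset.Icc (i + 1) c, (x j - x i)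
      = (1 - (m i : ℝ) * t) * ((B : ℝ) * t ^ (c - 1 - i)) := by
    have this2 : ∀ j ∈ Finset.Icc (i + 1) (c - 1), x j - x i = ((m j - m i : ℚ) : ℝ) * t := by
      intro j hj
      have hj' := Finset.mem_Icc.mp hj
      rw [hx i hiI, hx j (Finset.mem_Icc.mpr ⟨by omega, hj'.2⟩)]
      push_cast; ring
    rw [hicc2, Finset.prod_insert (by simp only [Finset.mem_Icc]; omega),
      Finset.prod_congr rfl this2, hxc, hx i hiI]
    congr 1
    rw [Finset.prod_mul_distrib, Finset.prod_const,
      Nat.card_Icc, show c - 1 + 1 - (i + 1) = c - 1 - i from by omega, hBdef]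
    push_cast
    ring
  rw [h1, h2, h3] at heq
  -- cancel t ^ (c - 2)
  have hpow : t ^ (i - 1) * t ^ (c - 1 - i) = t ^ (c - 2) := by
    rw [← pow_add]; congr 1; omega
  have heq2 : (L : ℝ) * (P : ℝ) * t ^ (c - 2)
      = (α : ℝ) * (A : ℝ) * (B : ℝ) * (1 - (m i : ℝ) * t) * t ^ (c - 2) := by
    have e : (α : ℝ) * (A : ℝ) * (B : ℝ) * (1 - (m i : ℝ) * t) * t ^ (c - 2)
        = (α : ℝ) * ((A : ℝ) * t ^ (i - 1) *
            ((1 - (m i : ℝ) * t) * ((B : ℝ) * t ^ (c - 1 - i)))) := by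
      rw [← hpow]; ring
    rw [e, mul_assoc]
    exact heq
  have htpow : (t : ℝ) ^ (c - 2) ≠ 0 := pow_ne_zero _ ht
  have heq3 : (L : ℝ) * (P : ℝ)
      = (α : ℝ) * (A : ℝ) * (B : ℝ) * (1 - (m i : ℝ) * t) :=
    mul_right_cancel₀ htpow heq2
  -- solve for t
  refine ⟨(α * A * B - L * P) / (α * A * B * m i), ?_⟩
  have hα' : (α : ℝ) ≠ 0 := Nat.cast_ne_zero.mpr hα.ne'
  have hA' : (A : ℝ) ≠ 0 := Rat.cast_ne_zero.mpr hA
  have hB' : (B : ℝ) ≠ 0 := Rat.cast_ne_zero.mpr hB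
  have hmi' : ((m i : ℚ) : ℝ) ≠ 0 := Rat.cast_ne_zero.mpr hmi
  push_cast
  field_simp
  linarith [heq3]
end

section
/- Let D = (0, x, y, z) be a degree sequence of codimension 3 (integers 0 < x < y < z). Then B_0(D) + B_1(D) + B_2(D) + B_3(D) ≥ 2·B_0(D) + 2·B_3(D) + 2. -/
/-- For any codimension-3 degree sequence `D = (0, x, y, z)`,
`B_0(D) + B_1(D) + B_2(D) + B_3(D) ≥ 2·B_0(D) + 2·B_3(D) + 2`, where
`B_i(D) = L(D)·π_i(D)` with `L(D)` the least positive integer making all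
`L·π_i(D)` integers (and `π_0(D) = 1`). -/
theorem sum_B_ge_two_B0_add_two_B3_add_two
    (x y z : ℤ) (hx : 0 < x) (hxy : x < y) (hyz : y < z)
    (L : ℕ)
    (hL : IsLeast {L' : ℕ | 0 < L' ∧
      (∃ n : ℤ, (L' : ℚ) * piOne x y z = n) ∧
      (∃ n : ℤ, (L' : ℚ) * piTwo x y z = n) ∧
      (∃ n : ℤ, (L' : ℚ) * piThree x y z = n)} L) :
    (L : ℚ) * 1 + (L : ℚ) * piOne x y z + (L : ℚ) * piTwo x y z
        + (L : ℚ) * piThree x y z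
      ≥ 2 * ((L : ℚ) * 1) + 2 * ((L : ℚ) * piThree x y z) + 2 := by
  obtain ⟨⟨hLpos, ⟨n1, h1⟩, _, _⟩, _⟩ := hL
  have hyx : (0:ℚ) < ((y - x : ℤ) : ℚ) := by exact_mod_cast sub_pos.mpr hxy
  have hzx : (0:ℚ) < ((z - x : ℤ) : ℚ) := by
    exact_mod_cast sub_pos.mpr (hxy.trans hyz)
  have hzy : (0:ℚ) < ((z - y : ℤ) : ℚ) := by exact_mod_cast sub_pos.mpr hyz
  -- identity: π₂ = π₁ + π₃ - 1
  have hid : piTwo x y z = piOne x y z + piThree x y z - 1 := by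
    have h1' : ((y:ℚ) - x) ≠ 0 := by push_cast at hyx; linarith
    have h2' : ((z:ℚ) - x) ≠ 0 := by push_cast at hzx; linarith
    have h3' : ((z:ℚ) - y) ≠ 0 := by push_cast at hzy; linarith
    unfold piOne piTwo piThree
    push_cast
    field_simp
    ring
  -- π₁ > 1
  have hpi1 : 1 < piOne x y z := by
    unfold piOne
    have hden : (0:ℚ) < (((y - x) * (z - x) : ℤ) : ℚ) := by
      exact_mod_cast mul_pos (sub_pos.mpr hxy) (sub_pos.mpr (hxy.trans hyz))
    rw [lt_div_iff₀ hden, one_mul]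
    have : ((y - x) * (z - x) : ℤ) < (y * z : ℤ) := by nlinarith
    exact_mod_cast this
  have hLQ : (0:ℚ) < (L : ℚ) := by exact_mod_cast hLpos
  have hlt : (L : ℚ) < (n1 : ℚ) := by
    rw [← h1]
    nlinarith
  have hle : (L : ℚ) + 1 ≤ (n1 : ℚ) := by
    have : (L : ℤ) < n1 := by exact_mod_cast hlt
    exact_mod_cast this
  have : (L : ℚ) + 1 ≤ (L : ℚ) * piOne x y z := h1 ▸ hle
  rw [hid]
  linarith
end

section
/- Let D = (0, x, y, z) be a nondegenerate degree sequence of codimension 3 (integers 0 < x < y < z with gcd(x, y, z) = 1). Then B_0(D) + B_1(D) + B_2(D) + B_3(D) < 12 if and only if D is one of the following four sequences: D = (0,1,3,4) with B(D) = (1,2,2,1); D = (0,1,2,3) with B(D) = (1,3,3,1); D = (0,1,5,6) with B(D) = (2,3,3,2); D = (0,3,5,8) with B(D) = (1,4,4,1). -/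
set_option maxHeartbeats 1600000 in
lemma boundsAux (x a b L B1 B2 B3 : ℕ) (hx : 0 < x) (ha : 0 < a) (hb : 0 < b) (hL : 0 < L)
    (e1 : B1 * (a * (a + b)) = L * ((x + a) * (x + a + b)))
    (e2 : B2 * (a * b) = L * (x * (x + a + b)))
    (e3 : B3 * ((a + b) * b) = L * (x * (x + a)))
    (hsum : L + B1 + B2 + B3 ≤ 11)
    (hg : Nat.gcd x (Nat.gcd (x + a) (x + a + b)) = 1) :
    x ≤ 12 ∧ a ≤ 24 ∧ b ≤ 12 ∧ L ≤ 4 := by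
  -- positivity of the B's
  have hB1 : 0 < B1 := by
    have hpos : 0 < B1 * (a * (a + b)) := by rw [e1]; positivity
    exact Nat.pos_of_ne_zero fun h => by simp [h] at hpos
  have hB2 : 0 < B2 := by
    have hpos : 0 < B2 * (a * b) := by rw [e2]; positivity
    exact Nat.pos_of_ne_zero fun h => by simp [h] at hpos
  have hB3 : 0 < B3 := by
    have hpos : 0 < B3 * ((a + b) * b) := by rw [e3]; positivity
    exact Nat.pos_of_ne_zero fun h => by simp [h] at hpos
  -- B1 > L
  have hB1L : L < B1 := by
    have key : L * (a * (a + b)) < B1 * (a * (a + b)) := by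
      rw [e1]
      have h1 : a * (a + b) < (x + a) * (x + a + b) := by nlinarith
      exact Nat.mul_lt_mul_of_le_of_lt (le_refl L) h1 hL
    exact Nat.lt_of_mul_lt_mul_right key
  have hL4 : L ≤ 4 := by omega
  -- product bounds
  have hB2B3 : B2 * B3 ≤ 16 := by
    have h1 : B2 + B3 ≤ 8 := by omega
    have h2 : B2 ≤ 7 := by omega
    interval_cases B2 <;> omega
  have hLB1 : L * B1 ≤ 20 := by
    have h1 : L + B1 ≤ 9 := by omega
    interval_cases L <;> omega
  have hB1B2 : B1 * B2 ≤ 20 := by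
    have h1 : B1 + B2 ≤ 9 := by omega
    have h2 : B1 ≤ 8 := by omega
    interval_cases B1 <;> omega
  have hLB3 : L * B3 ≤ 10 := by
    have h1 : B3 + 2 * L ≤ 9 := by omega
    interval_cases L <;> omega
  -- cast equations to ℤ
  have E1 : (B1 : ℤ) * (a * (a + b)) = L * ((x + a) * (x + a + b)) := by exact_mod_cast e1
  have E2 : (B2 : ℤ) * (a * b) = L * (x * (x + a + b)) := by exact_mod_cast e2
  have E3 : (B3 : ℤ) * ((a + b) * b) = L * (x * (x + a)) := by exact_mod_cast e3
  -- derived identities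
  have i1 : b ^ 2 * (B2 * B3) = L * B1 * x ^ 2 := by
    have hc : ((a : ℤ) * ((a : ℤ) + b)) ≠ 0 := by positivity
    have h : ((b : ℤ) ^ 2 * ((B2 : ℤ) * B3)) * ((a : ℤ) * ((a : ℤ) + b))
        = ((L : ℤ) * B1 * (x : ℤ) ^ 2) * ((a : ℤ) * ((a : ℤ) + b)) := by
      linear_combination (-(L : ℤ) * x ^ 2) * E1 + ((B3 : ℤ) * ((a : ℤ) + b) * b) * E2
        + ((L : ℤ) * x * ((x : ℤ) + a + b)) * E3
    have := mul_right_cancel₀ hc h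
    exact_mod_cast this
  have i2 : a ^ 2 * (B1 * B2) = L * B3 * (x + a + b) ^ 2 := by
    have hc : ((L : ℤ) * ((x : ℤ) * ((x : ℤ) + a))) ≠ 0 := by positivity
    have h : ((a : ℤ) ^ 2 * ((B1 : ℤ) * B2)) * ((L : ℤ) * ((x : ℤ) * ((x : ℤ) + a)))
        = ((L : ℤ) * B3 * ((x : ℤ) + a + b) ^ 2) * ((L : ℤ) * ((x : ℤ) * ((x : ℤ) + a))) := by
      linear_combination ((B2 : ℤ) * B3 * a * b) * E1
        + ((B3 : ℤ) * L * ((x : ℤ) + a) * ((x : ℤ) + a + b)) * E2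
        - ((a : ℤ) ^ 2 * B1 * B2) * E3
    have := mul_right_cancel₀ hc h
    exact_mod_cast this
  -- first gcd split : x and b
  set t := Nat.gcd x b with htdef
  have htpos : 0 < t := Nat.gcd_pos_of_pos_left b hx
  set p := x / t with hpdef
  set q := b / t with hqdef
  have hxp : x = t * p := (Nat.mul_div_cancel' (Nat.gcd_dvd_left x b)).symm
  have hbq : b = t * q := (Nat.mul_div_cancel' (Nat.gcd_dvd_right x b)).symm
  have hcop : Nat.Coprime p q := Nat.coprime_div_gcd_div_gcd htpos
  have hppos : 0 < p := by
    rcases Nat.eq_zero_or_pos p with h | h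
    · rw [h, Nat.mul_zero] at hxp; omega
    · exact h
  have hqpos : 0 < q := by
    rcases Nat.eq_zero_or_pos q with h | h
    · rw [h, Nat.mul_zero] at hbq; omega
    · exact h
  have i1' : q ^ 2 * (B2 * B3) = L * B1 * p ^ 2 := by
    have hZ : (t : ℤ) ^ 2 * ((q : ℤ) ^ 2 * ((B2 : ℤ) * B3))
        = (t : ℤ) ^ 2 * ((L : ℤ) * B1 * (p : ℤ) ^ 2) := by
      have hi : ((b : ℤ)) ^ 2 * ((B2 : ℤ) * B3) = (L : ℤ) * B1 * (x : ℤ) ^ 2 := by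
        exact_mod_cast i1
      rw [show ((b : ℤ)) = (t : ℤ) * q by exact_mod_cast congrArg (Nat.cast : ℕ → ℤ) hbq,
        show ((x : ℤ)) = (t : ℤ) * p by exact_mod_cast congrArg (Nat.cast : ℕ → ℤ) hxp] at hi
      linear_combination hi
    have ht2 : ((t : ℤ)) ^ 2 ≠ 0 := by positivity
    have := mul_left_cancel₀ ht2 hZ
    exact_mod_cast this
  have hdvd_p : p ^ 2 ∣ B2 * B3 := by
    have h1 : p ^ 2 ∣ L * B1 * p ^ 2 := dvd_mul_left _ _
    rw [← i1'] at h1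
    exact Nat.Coprime.dvd_of_dvd_mul_left (Nat.Coprime.pow 2 2 hcop) h1
  have hdvd_q : q ^ 2 ∣ L * B1 := by
    have h1 : q ^ 2 ∣ q ^ 2 * (B2 * B3) := dvd_mul_right _ _
    rw [i1'] at h1
    exact Nat.Coprime.dvd_of_dvd_mul_right (Nat.Coprime.pow 2 2 hcop.symm) h1
  have hp4 : p ≤ 4 := by
    have h1 := Nat.le_of_dvd (by positivity) hdvd_p
    by_contra hc
    push_neg at hc
    have h2 := Nat.pow_le_pow_left (show 4 + 1 ≤ p by omega) 2
    norm_num at h2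
    linarith
  have hq4 : q ≤ 4 := by
    have h1 := Nat.le_of_dvd (by positivity) hdvd_q
    by_contra hc
    push_neg at hc
    have h2 := Nat.pow_le_pow_left (show 4 + 1 ≤ q by omega) 2
    norm_num at h2
    linarith
  -- second gcd split : z = x+a+b and a
  set s := Nat.gcd (x + a + b) a with hsdef
  have hspos : 0 < s := Nat.gcd_pos_of_pos_right _ ha
  set p' := (x + a + b) / s with hp'def
  set q' := a / s with hq'def
  have hzp : x + a + b = s * p' := (Nat.mul_div_cancel' (Nat.gcd_dvd_left _ a)).symm
  have haq : a = s * q' := (Nat.mul_div_cancel' (Nat.gcd_dvd_right _ a)).symm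
  have hcop' : Nat.Coprime p' q' := Nat.coprime_div_gcd_div_gcd hspos
  have hp'pos : 0 < p' := by
    rcases Nat.eq_zero_or_pos p' with h | h
    · rw [h, Nat.mul_zero] at hzp; omega
    · exact h
  have hq'pos : 0 < q' := by
    rcases Nat.eq_zero_or_pos q' with h | h
    · rw [h, Nat.mul_zero] at haq; omega
    · exact h
  have i2' : q' ^ 2 * (B1 * B2) = L * B3 * p' ^ 2 := by
    have hZ : (s : ℤ) ^ 2 * ((q' : ℤ) ^ 2 * ((B1 : ℤ) * B2))
        = (s : ℤ) ^ 2 * ((L : ℤ) * B3 * (p' : ℤ) ^ 2) := by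
      have hi : ((a : ℤ)) ^ 2 * ((B1 : ℤ) * B2) = (L : ℤ) * B3 * ((x : ℤ) + a + b) ^ 2 := by
        exact_mod_cast i2
      rw [show ((x : ℤ) + a + b) = (s : ℤ) * p' by exact_mod_cast congrArg (Nat.cast : ℕ → ℤ) hzp,
        show ((a : ℤ)) = (s : ℤ) * q' by exact_mod_cast congrArg (Nat.cast : ℕ → ℤ) haq] at hi
      linear_combination hi
    have hs2 : ((s : ℤ)) ^ 2 ≠ 0 := by positivity
    have := mul_left_cancel₀ hs2 hZ
    exact_mod_cast this
  have hdvd_p' : p' ^ 2 ∣ B1 * B2 := by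
    have h1 : p' ^ 2 ∣ L * B3 * p' ^ 2 := dvd_mul_left _ _
    rw [← i2'] at h1
    exact Nat.Coprime.dvd_of_dvd_mul_left (Nat.Coprime.pow 2 2 hcop') h1
  have hdvd_q' : q' ^ 2 ∣ L * B3 := by
    have h1 : q' ^ 2 ∣ q' ^ 2 * (B1 * B2) := dvd_mul_right _ _
    rw [i2'] at h1
    exact Nat.Coprime.dvd_of_dvd_mul_right (Nat.Coprime.pow 2 2 hcop'.symm) h1
  have hp'4 : p' ≤ 4 := by
    have h1 := Nat.le_of_dvd (by positivity) hdvd_p'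
    by_contra hc
    push_neg at hc
    have h2 := Nat.pow_le_pow_left (show 4 + 1 ≤ p' by omega) 2
    norm_num at h2
    linarith
  have hq'3 : q' ≤ 3 := by
    have h1 := Nat.le_of_dvd (by positivity) hdvd_q'
    by_contra hc
    push_neg at hc
    have h2 := Nat.pow_le_pow_left (show 3 + 1 ≤ q' by omega) 2
    norm_num at h2
    linarith
  -- t and s are coprime
  have hts : Nat.Coprime t s := by
    have hdx : Nat.gcd t s ∣ x := (Nat.gcd_dvd_left t s).trans (Nat.gcd_dvd_left x b)
    have hdb : Nat.gcd t s ∣ b := (Nat.gcd_dvd_left t s).trans (Nat.gcd_dvd_right x b)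
    have hda : Nat.gcd t s ∣ a := (Nat.gcd_dvd_right t s).trans (Nat.gcd_dvd_right (x + a + b) a)
    have hall : Nat.gcd t s ∣ Nat.gcd x (Nat.gcd (x + a) (x + a + b)) :=
      Nat.dvd_gcd hdx (Nat.dvd_gcd (hdx.add hda) ((hdx.add hda).add hdb))
    rw [hg] at hall
    exact Nat.dvd_one.mp hall
  -- p' > q'
  have hq'p' : q' < p' := by
    have hlt : s * q' < s * p' := by rw [← hzp, ← haq]; omega
    exact Nat.lt_of_mul_lt_mul_left hlt
  obtain ⟨u, hu⟩ : ∃ u, p' = q' + u := ⟨p' - q', by omega⟩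
  have hupos : 0 < u := by omega
  have hkey : s * u = t * (p + q) := by
    rw [hu] at hzp
    have h0 : x + a + b = s * q' + s * u := by rw [hzp]; ring
    have h1 : t * (p + q) = t * p + t * q := by ring
    have h2 : x = t * p := hxp
    have h3 : b = t * q := hbq
    have h4 : a = s * q' := haq
    linarith
  have htu : t ∣ u := by
    have hdv : t ∣ s * u := by rw [hkey]; exact dvd_mul_right t (p + q)
    exact (Nat.Coprime.dvd_of_dvd_mul_left hts hdv)
  have hspq : s ∣ p + q := by
    have hdv : s ∣ t * (p + q) := by rw [← hkey]; exact dvd_mul_right s u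
    exact (Nat.Coprime.dvd_of_dvd_mul_left hts.symm hdv)
  have ht3 : t ≤ 3 := by
    have h1 : t ≤ u := Nat.le_of_dvd hupos htu
    omega
  have hs8 : s ≤ 8 := by
    have h1 : s ≤ p + q := Nat.le_of_dvd (by omega) hspq
    omega
  refine ⟨?_, ?_, ?_, hL4⟩
  · calc x = t * p := hxp
      _ ≤ 3 * 4 := Nat.mul_le_mul ht3 hp4
  · calc a = s * q' := haq
      _ ≤ 8 * 3 := Nat.mul_le_mul hs8 hq'3
  · calc b = t * q := hbq
      _ ≤ 3 * 4 := Nat.mul_le_mul ht3 hq4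

set_option maxHeartbeats 8000000 in
set_option synthInstance.maxSize 1000000 in
set_option synthInstance.maxHeartbeats 10000000 in
theorem finCheck : ∀ x : ℕ, x ≤ 12 → ∀ a : ℕ, a ≤ 24 → ∀ b : ℕ, b ≤ 12 → ∀ L : ℕ, L ≤ 4 →
    0 < x → 0 < a → 0 < b → 0 < L →
    Nat.gcd x (Nat.gcd (x + a) (x + a + b)) = 1 →
    (a * (a + b)) ∣ L * ((x + a) * (x + a + b)) →
    (a * b) ∣ L * (x * (x + a + b)) →
    ((a + b) * b) ∣ L * (x * (x + a)) →
    L + L * ((x + a) * (x + a + b)) / (a * (a + b)) + L * (x * (x + a + b)) / (a * b)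
      + L * (x * (x + a)) / ((a + b) * b) ≤ 11 →
    (x = 1 ∧ a = 2 ∧ b = 1 ∧ L = 1) ∨ (x = 1 ∧ a = 1 ∧ b = 1 ∧ L = 1) ∨
    (x = 1 ∧ a = 4 ∧ b = 1 ∧ L = 2) ∨ (x = 3 ∧ a = 2 ∧ b = 3 ∧ L = 1) := by decide


/-- A nondegenerate codimension-3 degree sequence `D = (0, x, y, z)` has
`B_0(D) + B_1(D) + B_2(D) + B_3(D) < 12` if and only if `D` is one of
`(0,1,3,4)` with `B(D) = (1,2,2,1)`, `(0,1,2,3)` with `B(D) = (1,3,3,1)`,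
`(0,1,5,6)` with `B(D) = (2,3,3,2)`, or `(0,3,5,8)` with `B(D) = (1,4,4,1)`. -/
theorem sum_B_lt_twelve_classification
    (x y z : ℤ) (hx : 0 < x) (hxy : x < y) (hyz : y < z)
    (hgcd : Int.gcd x (Int.gcd y z) = 1)
    (L : ℕ)
    (hL : IsLeast {L' : ℕ | 0 < L' ∧
      (∃ n : ℤ, (L' : ℚ) * piOne x y z = n) ∧
      (∃ n : ℤ, (L' : ℚ) * piTwo x y z = n) ∧
      (∃ n : ℤ, (L' : ℚ) * piThree x y z = n)} L) :
    (L : ℚ) * 1 + (L : ℚ) * piOne x y z + (L : ℚ) * piTwo x y z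
        + (L : ℚ) * piThree x y z < 12 ↔
      (x = 1 ∧ y = 3 ∧ z = 4 ∧ (L : ℚ) * 1 = 1 ∧ (L : ℚ) * piOne x y z = 2 ∧
        (L : ℚ) * piTwo x y z = 2 ∧ (L : ℚ) * piThree x y z = 1) ∨
      (x = 1 ∧ y = 2 ∧ z = 3 ∧ (L : ℚ) * 1 = 1 ∧ (L : ℚ) * piOne x y z = 3 ∧
        (L : ℚ) * piTwo x y z = 3 ∧ (L : ℚ) * piThree x y z = 1) ∨
      (x = 1 ∧ y = 5 ∧ z = 6 ∧ (L : ℚ) * 1 = 2 ∧ (L : ℚ) * piOne x y z = 3 ∧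
        (L : ℚ) * piTwo x y z = 3 ∧ (L : ℚ) * piThree x y z = 2) ∨
      (x = 3 ∧ y = 5 ∧ z = 8 ∧ (L : ℚ) * 1 = 1 ∧ (L : ℚ) * piOne x y z = 4 ∧
        (L : ℚ) * piTwo x y z = 4 ∧ (L : ℚ) * piThree x y z = 1) := by
  obtain ⟨⟨hLpos, ⟨n1, hn1⟩, ⟨n2, hn2⟩, ⟨n3, hn3⟩⟩, -⟩ := hL
  have hd1 : (((y - x) * (z - x) : ℤ) : ℚ) ≠ 0 := by
    have h : (0 : ℤ) < (y - x) * (z - x) := mul_pos (by omega) (by omega)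
    exact_mod_cast h.ne'
  have hd2 : (((y - x) * (z - y) : ℤ) : ℚ) ≠ 0 := by
    have h : (0 : ℤ) < (y - x) * (z - y) := mul_pos (by omega) (by omega)
    exact_mod_cast h.ne'
  have hd3 : (((z - x) * (z - y) : ℤ) : ℚ) ≠ 0 := by
    have h : (0 : ℤ) < (z - x) * (z - y) := mul_pos (by omega) (by omega)
    exact_mod_cast h.ne'
  have E1 : (L : ℤ) * (y * z) = n1 * ((y - x) * (z - x)) := by
    rw [piOne, mul_div_assoc', div_eq_iff hd1] at hn1
    exact_mod_cast hn1
  have E2 : (L : ℤ) * (x * z) = n2 * ((y - x) * (z - y)) := by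
    rw [piTwo, mul_div_assoc', div_eq_iff hd2] at hn2
    exact_mod_cast hn2
  have E3 : (L : ℤ) * (x * y) = n3 * ((z - x) * (z - y)) := by
    rw [piThree, mul_div_assoc', div_eq_iff hd3] at hn3
    exact_mod_cast hn3
  -- positivity of the numerators
  have hn1pos : 0 < n1 := by nlinarith [mul_pos (by omega : (0:ℤ) < y - x) (by omega : (0:ℤ) < z - x), mul_pos (by omega : (0:ℤ) < y) (by omega : (0:ℤ) < z), (by exact_mod_cast hLpos : (0:ℤ) < (L:ℤ))]
  have hn2pos : 0 < n2 := by nlinarith [mul_pos (by omega : (0:ℤ) < y - x) (by omega : (0:ℤ) < z - y), mul_pos (by omega : (0:ℤ) < x) (by omega : (0:ℤ) < z), (by exact_mod_cast hLpos : (0:ℤ) < (L:ℤ))]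
  have hn3pos : 0 < n3 := by nlinarith [mul_pos (by omega : (0:ℤ) < z - x) (by omega : (0:ℤ) < z - y), mul_pos (by omega : (0:ℤ) < x) (by omega : (0:ℤ) < y), (by exact_mod_cast hLpos : (0:ℤ) < (L:ℤ))]
  -- pass to natural numbers
  obtain ⟨X, hX, hXpos⟩ : ∃ X : ℕ, x = (X : ℤ) ∧ 0 < X := ⟨x.toNat, by omega, by omega⟩
  obtain ⟨A, hA, hApos⟩ : ∃ A : ℕ, y = x + (A : ℤ) ∧ 0 < A := ⟨(y - x).toNat, by omega, by omega⟩
  obtain ⟨Bb, hB, hBpos⟩ : ∃ Bb : ℕ, z = y + (Bb : ℤ) ∧ 0 < Bb := ⟨(z - y).toNat, by omega, by omega⟩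
  obtain ⟨N1, hN1⟩ : ∃ N1 : ℕ, n1 = (N1 : ℤ) := ⟨n1.toNat, by omega⟩
  obtain ⟨N2, hN2⟩ : ∃ N2 : ℕ, n2 = (N2 : ℤ) := ⟨n2.toNat, by omega⟩
  obtain ⟨N3, hN3⟩ : ∃ N3 : ℕ, n3 = (N3 : ℤ) := ⟨n3.toNat, by omega⟩
  subst hN1 hN2 hN3 hX hA hB
  have e1 : N1 * (A * (A + Bb)) = L * ((X + A) * (X + A + Bb)) := by
    have h : ((N1 : ℤ)) * ((A : ℤ) * ((A : ℤ) + (Bb : ℤ)))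
        = (L : ℤ) * (((X : ℤ) + A) * ((X : ℤ) + A + Bb)) := by linear_combination -E1
    exact_mod_cast h
  have e2 : N2 * (A * Bb) = L * (X * (X + A + Bb)) := by
    have h : ((N2 : ℤ)) * ((A : ℤ) * (Bb : ℤ))
        = (L : ℤ) * ((X : ℤ) * ((X : ℤ) + A + Bb)) := by linear_combination -E2
    exact_mod_cast h
  have e3 : N3 * ((A + Bb) * Bb) = L * (X * (X + A)) := by
    have h : ((N3 : ℤ)) * (((A : ℤ) + Bb) * (Bb : ℤ))
        = (L : ℤ) * ((X : ℤ) * ((X : ℤ) + A)) := by linear_combination -E3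
    exact_mod_cast h
  have hg : Nat.gcd X (Nat.gcd (X + A) (X + A + Bb)) = 1 := by
    have h1 : ((X : ℤ) + A) = ((X + A : ℕ) : ℤ) := by push_cast; ring
    have h2 : ((X : ℤ) + A + Bb) = ((X + A + Bb : ℕ) : ℤ) := by push_cast; ring
    rw [h2, h1, Int.gcd_natCast_natCast] at hgcd
    rw [Int.gcd_natCast_natCast] at hgcd
    exact hgcd
  constructor
  · intro hlt
    rw [hn1, hn2, hn3, mul_one] at hlt
    have hsumZ : (L : ℤ) + N1 + N2 + N3 < 12 := by exact_mod_cast hlt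
    have hsum : L + N1 + N2 + N3 ≤ 11 := by omega
    obtain ⟨hbX, hbA, hbB, hbL⟩ :=
      boundsAux X A Bb L N1 N2 N3 hXpos hApos hBpos hLpos e1 e2 e3 hsum hg
    have hdiv1 : L * ((X + A) * (X + A + Bb)) / (A * (A + Bb)) = N1 := by
      rw [← e1]; exact Nat.mul_div_cancel _ (Nat.mul_pos hApos (by omega))
    have hdiv2 : L * (X * (X + A + Bb)) / (A * Bb) = N2 := by
      rw [← e2]; exact Nat.mul_div_cancel _ (Nat.mul_pos hApos hBpos)
    have hdiv3 : L * (X * (X + A)) / ((A + Bb) * Bb) = N3 := by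
      rw [← e3]; exact Nat.mul_div_cancel _ (Nat.mul_pos (by omega) hBpos)
    have hfin := finCheck X hbX A hbA Bb hbB L hbL hXpos hApos hBpos hLpos hg
      ⟨N1, by rw [← e1]; ring⟩ ⟨N2, by rw [← e2]; ring⟩ ⟨N3, by rw [← e3]; ring⟩
      (by rw [hdiv1, hdiv2, hdiv3]; omega)
    rcases hfin with ⟨rfl, rfl, rfl, rfl⟩ | ⟨rfl, rfl, rfl, rfl⟩ |
      ⟨rfl, rfl, rfl, rfl⟩ | ⟨rfl, rfl, rfl, rfl⟩
    · exact Or.inl ⟨by norm_num, by norm_num, by norm_num, by norm_num,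
        by norm_num [piOne], by norm_num [piTwo], by norm_num [piThree]⟩
    · exact Or.inr (Or.inl ⟨by norm_num, by norm_num, by norm_num, by norm_num,
        by norm_num [piOne], by norm_num [piTwo], by norm_num [piThree]⟩)
    · exact Or.inr (Or.inr (Or.inl ⟨by norm_num, by norm_num, by norm_num, by norm_num,
        by norm_num [piOne], by norm_num [piTwo], by norm_num [piThree]⟩))
    · exact Or.inr (Or.inr (Or.inr ⟨by norm_num, by norm_num, by norm_num, by norm_num,
        by norm_num [piOne], by norm_num [piTwo], by norm_num [piThree]⟩))
  · intro h
    rcases h with ⟨-, -, -, c4, c5, c6, c7⟩ | ⟨-, -, -, c4, c5, c6, c7⟩ |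
      ⟨-, -, -, c4, c5, c6, c7⟩ | ⟨-, -, -, c4, c5, c6, c7⟩ <;>
      rw [c4, c5, c6, c7] <;> norm_num
end

section
/- There are no integers x, y, z with 0 < x < y < z and gcd(x, y, z) = 1 satisfying simultaneously yz = 3(y − x)(z − x), xz = 4(y − x)(z − y), and xy = 2(z − x)(z − y). Equivalently, no nondegenerate codimension-3 degree sequence D = (0, x, y, z) has (π_0(D), π_1(D), π_2(D), π_3(D)) = (1, 3, 4, 2). -/
lemma aux_nat (a b : ℕ) (hb : b ≠ 0) : a ^ 2 ≠ 24 * b ^ 2 := by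
  intro h
  have ha : a ≠ 0 := by
    rintro rfl
    simp at h
    omega
  have h24 : (24 : ℕ).factorization 2 = 3 := by
    have : (24 : ℕ) = 2 ^ 3 * 3 := by norm_num
    rw [this, Nat.factorization_mul (by norm_num) (by norm_num),
      Nat.Prime.factorization_pow (by norm_num)]
    simp [Nat.factorization_eq_zero_of_not_dvd (by norm_num : ¬ (2:ℕ) ∣ 3)]
  have := congrArg (fun n => n.factorization 2) h
  simp only [Nat.factorization_mul (by norm_num : (24:ℕ) ≠ 0) (pow_ne_zero 2 hb),
    Nat.factorization_pow, Finsupp.add_apply, Finsupp.smul_apply, h24,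
    smul_eq_mul] at this
  omega

lemma aux_int (a b : ℤ) (hb : b ≠ 0) : a ^ 2 ≠ 24 * b ^ 2 := by
  intro h
  have : a.natAbs ^ 2 = 24 * b.natAbs ^ 2 := by
    have := congrArg Int.natAbs h
    simpa [Int.natAbs_mul, Int.natAbs_pow] using this
  exact aux_nat _ _ (Int.natAbs_ne_zero.mpr hb) this

/-- There are no integers `0 < x < y < z` with `gcd(x, y, z) = 1` satisfying
`yz = 3(y − x)(z − x)`, `xz = 4(y − x)(z − y)`, and `xy = 2(z − x)(z − y)`;
i.e., no nondegenerate codimension-3 degree sequence has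
`(π_0, π_1, π_2, π_3) = (1, 3, 4, 2)`. -/
theorem no_degree_sequence_pi_1342 :
    ¬ ∃ x y z : ℤ, 0 < x ∧ x < y ∧ y < z ∧
      Int.gcd x (Int.gcd y z) = 1 ∧
      y * z = 3 * (y - x) * (z - x) ∧
      x * z = 4 * (y - x) * (z - y) ∧
      x * y = 2 * (z - x) * (z - y) := by
  rintro ⟨x, y, z, hx, hxy, hyz, -, h1, h2, h3⟩
  have hxz : x < z := lt_trans hxy hyz
  have hm : (y - x) * (z - x) * (z - y) ≠ 0 := by
    have : 0 < (y - x) * (z - x) * (z - y) :=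
      mul_pos (mul_pos (by omega) (by omega)) (by omega)
    omega
  apply aux_int (x * y * z) ((y - x) * (z - x) * (z - y)) hm
  have key : (x * y) * ((y * z) * (x * z)) =
      (2 * (z - x) * (z - y)) * ((3 * (y - x) * (z - x)) * (4 * (y - x) * (z - y))) := by
    rw [h1, h2, h3]
  ring_nf
  ring_nf at key
  linarith [key]
end

section
/- Let a ∈ {3, 4} and let x, y, z be integers with 0 < x < y < z and gcd(x, y, z) = 1 satisfying yz = a(y − x)(z − x), xz = a(y − x)(z − y), and xy = (z − x)(z − y). Then either a = 3 and (x, y, z) = (1, 2, 3), or a = 4 and (x, y, z) = (3, 5, 8). Equivalently, the only nondegenerate codimension-3 degree sequences D with (π_0(D), π_1(D), π_2(D), π_3(D)) = (1, a, a, 1) for a ∈ {3,4} are (0,1,2,3) for a = 3 and (0,3,5,8) for a = 4. -/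
/-! Subtracting the second equation from the first gives `z = a (y - x)`, and the third
equation is `z (z - x - y) = 0`, so also `z = x + y`. Hence `x + y = a (y - x)`, which forces
`(x, y, z)` to be a positive multiple of `(1, 2, 3)` for `a = 3` and of `(3, 5, 8)` for `a = 4`;
coprimality makes the multiplier `1`. -/

theorem Int.eq_one_of_gcd_mul_eq_one {t p q r : ℤ} (ht : 0 < t)
    (h : Int.gcd (t * p) (Int.gcd (t * q) (t * r)) = 1) : t = 1 := by
  have hdvd : t ∣ ((Int.gcd (t * p) (Int.gcd (t * q) (t * r)) : ℕ) : ℤ) :=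
    Int.dvd_coe_gcd (dvd_mul_right t p)
      (Int.dvd_coe_gcd (dvd_mul_right t q) (dvd_mul_right t r))
  rw [h] at hdvd
  exact Int.eq_one_of_dvd_one ht.le hdvd

theorem eq_mul_sub_of_mul_eq_mul_sub {a x y z : ℤ} (hxy : x < y)
    (h1 : y * z = a * (y - x) * (z - x)) (h2 : x * z = a * (y - x) * (z - y)) :
    z = a * (y - x) :=
  mul_left_cancel₀ (sub_ne_zero.mpr hxy.ne') (by linear_combination h1 - h2)

theorem eq_add_of_mul_eq_sub_mul_sub {x y z : ℤ} (hz : z ≠ 0)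
    (h3 : x * y = (z - x) * (z - y)) : z = x + y :=
  mul_left_cancel₀ hz (by linear_combination -h3)

theorem degree_sequences_pi_1aa1_general
    (a x y z : ℤ) (ha : a = 3 ∨ a = 4)
    (hx : 0 < x) (hxy : x < y)
    (hgcd : Int.gcd x (Int.gcd y z) = 1)
    (h1 : y * z = a * (y - x) * (z - x))
    (h2 : x * z = a * (y - x) * (z - y))
    (h3 : x * y = (z - x) * (z - y)) :
    (a = 3 ∧ x = 1 ∧ y = 2 ∧ z = 3) ∨ (a = 4 ∧ x = 3 ∧ y = 5 ∧ z = 8) := by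
  have hz : z = a * (y - x) := eq_mul_sub_of_mul_eq_mul_sub hxy h1 h2
  have hz_pos : 0 < z := by rw [hz]; rcases ha with rfl | rfl <;> linarith
  have hsum : z = x + y := eq_add_of_mul_eq_sub_mul_sub hz_pos.ne' h3
  rcases ha with rfl | rfl
  · obtain ⟨rfl, rfl⟩ : y = x * 2 ∧ z = x * 3 := by omega
    obtain rfl : x = 1 :=
      Int.eq_one_of_gcd_mul_eq_one (p := 1) (q := 2) (r := 3) hx (by rwa [mul_one])
    left; norm_num
  · obtain ⟨t, rfl⟩ : ∃ t, x = t * 3 := ⟨x / 3, by omega⟩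
    obtain ⟨rfl, rfl⟩ : y = t * 5 ∧ z = t * 8 := by omega
    obtain rfl : t = 1 := Int.eq_one_of_gcd_mul_eq_one (by omega) hgcd
    right; norm_num

/-- For `a ∈ {3, 4}`, the only integers `0 < x < y < z` with `gcd(x, y, z) = 1`
satisfying `yz = a(y − x)(z − x)`, `xz = a(y − x)(z − y)`, and
`xy = (z − x)(z − y)` are `(1, 2, 3)` when `a = 3` and `(3, 5, 8)` when `a = 4`;
i.e., the only nondegenerate codimension-3 degree sequences with
`π(D) = (1, a, a, 1)` are `(0,1,2,3)` for `a = 3` and `(0,3,5,8)` for `a = 4`. -/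
theorem degree_sequences_pi_1aa1
    (a x y z : ℤ) (ha : a = 3 ∨ a = 4)
    (hx : 0 < x) (hxy : x < y) (hyz : y < z)
    (hgcd : Int.gcd x (Int.gcd y z) = 1)
    (h1 : y * z = a * (y - x) * (z - x))
    (h2 : x * z = a * (y - x) * (z - y))
    (h3 : x * y = (z - x) * (z - y)) :
    (a = 3 ∧ x = 1 ∧ y = 2 ∧ z = 3) ∨ (a = 4 ∧ x = 3 ∧ y = 5 ∧ z = 8) :=
  degree_sequences_pi_1aa1_general a x y z ha hx hxy hgcd h1 h2 h3
end

section
/- Let x, y, z be integers with 0 < x < y < z and gcd(x, y, z) = 1 satisfying 2yz = 3(y − x)(z − x), 2xz = 3(y − x)(z − y), and xy = (z − x)(z − y). Then (x, y, z) = (1, 5, 6). Equivalently, the only nondegenerate codimension-3 degree sequence D with B(D) = (2, 3, 3, 2) is D = (0, 1, 5, 6). -/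
/-!
Subtracting the second equation from the first gives `(y - x)(2z - 3(y - x)) = 0`, so
`2z = 3(y - x)`; substituting this into the third leaves `3(y - x)(y - 5x) = 0`, so `y = 5x`
and `z = 6x`. Thus `x` divides `gcd(x, y, z) = 1`, forcing `x = 1`.
-/

lemma two_mul_eq_three_mul_sub_of_pi_one_eq_pi_two {x y z : ℤ} (hxy : x ≠ y)
    (h1 : 2 * (y * z) = 3 * (y - x) * (z - x))
    (h2 : 2 * (x * z) = 3 * (y - x) * (z - y)) :
    2 * z = 3 * (y - x) := by
  have hprod : (y - x) * (2 * z - 3 * (y - x)) = 0 := by linear_combination h1 - h2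
  have hne : y - x ≠ 0 := sub_ne_zero.mpr hxy.symm
  exact sub_eq_zero.mp ((mul_eq_zero.mp hprod).resolve_left hne)

lemma eq_five_mul_of_pi_three_eq_one {x y z : ℤ} (hxy : x ≠ y) (hz : 2 * z = 3 * (y - x))
    (h3 : x * y = (z - x) * (z - y)) :
    y = 5 * x := by
  have hprod : (y - x) * (y - 5 * x) = 0 := by
    have : 3 * ((y - x) * (y - 5 * x)) = 0 := by
      linear_combination (-2 * z - y + 5 * x) * hz - 4 * h3
    simpa using this
  have hne : y - x ≠ 0 := sub_ne_zero.mpr hxy.symm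
  exact sub_eq_zero.mp ((mul_eq_zero.mp hprod).resolve_left hne)

theorem degree_sequence_B_2332_general
    (x y z : ℤ) (hx : 0 < x) (hxy : x < y)
    (hgcd : Int.gcd x (Int.gcd y z) = 1)
    (h1 : 2 * (y * z) = 3 * (y - x) * (z - x))
    (h2 : 2 * (x * z) = 3 * (y - x) * (z - y))
    (h3 : x * y = (z - x) * (z - y)) :
    x = 1 ∧ y = 5 ∧ z = 6 := by
  have hz2 := two_mul_eq_three_mul_sub_of_pi_one_eq_pi_two hxy.ne h1 h2
  have hy : y = 5 * x := eq_five_mul_of_pi_three_eq_one hxy.ne hz2 h3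
  have hz : z = 6 * x := by omega
  have hdvd : x ∣ 1 := by
    have hdvd_gcd : x ∣ (Int.gcd x (Int.gcd y z) : ℤ) :=
      Int.dvd_coe_gcd dvd_rfl
        (Int.dvd_coe_gcd (Dvd.intro_left 5 hy.symm) (Dvd.intro_left 6 hz.symm))
    rwa [hgcd, Nat.cast_one] at hdvd_gcd
  have hx1 : x = 1 := Int.eq_one_of_dvd_one hx.le hdvd
  subst hx1
  omega

/-- The only integers `0 < x < y < z` with `gcd(x, y, z) = 1` satisfying
`2yz = 3(y − x)(z − x)`, `2xz = 3(y − x)(z − y)`, and `xy = (z − x)(z − y)` are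
`(x, y, z) = (1, 5, 6)`; i.e., the only nondegenerate codimension-3 degree
sequence `D` with `B(D) = (2, 3, 3, 2)` is `D = (0, 1, 5, 6)`. -/
theorem degree_sequence_B_2332
    (x y z : ℤ) (hx : 0 < x) (hxy : x < y) (hyz : y < z)
    (hgcd : Int.gcd x (Int.gcd y z) = 1)
    (h1 : 2 * (y * z) = 3 * (y - x) * (z - x))
    (h2 : 2 * (x * z) = 3 * (y - x) * (z - y))
    (h3 : x * y = (z - x) * (z - y)) :
    x = 1 ∧ y = 5 ∧ z = 6 :=
  degree_sequence_B_2332_general x y z hx hxy hgcd h1 h2 h3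
end

section
/- Let (a, b) be one of the sixteen pairs (7,9), (7,10), (7,11), (7,12), (7,13), (7,14), (7,15), (8,10), (8,11), (8,12), (8,13), (8,14), (9,11), (9,12), (9,13), (10,12). Then there are no integers x, y, z with 0 < x < y < z satisfying simultaneously yz(y + z − x)(y + z) = a(y − x)(z − x)(y + z − 2x)(y + z − x) and xz(y + z − x)(y + z) = b·z·(y − x)(z − y)(z − x). Equivalently, no self-dual codimension-5 degree sequence D = (0, x, y, z, y + z − x, y + z) has π_1(D) = a and π_2(D) = b for any of these pairs (a, b). -/
lemma cubic_descent (c3 c2 c1 c0 : ℤ) (p : ℕ) (hp : 2 ≤ p)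
    (h : ∀ u v : ZMod p, (c3 : ZMod p) * u ^ 3 + (c2 : ZMod p) * u ^ 2 * v
        + (c1 : ZMod p) * u * v ^ 2 + (c0 : ZMod p) * v ^ 3 = 0 → u = 0 ∧ v = 0) :
    ∀ y z : ℤ, c3 * y ^ 3 + c2 * y ^ 2 * z + c1 * y * z ^ 2 + c0 * z ^ 3 = 0 → y = 0 := by
  suffices H : ∀ n : ℕ, ∀ y z : ℤ, y.natAbs = n →
      c3 * y ^ 3 + c2 * y ^ 2 * z + c1 * y * z ^ 2 + c0 * z ^ 3 = 0 → y = 0 by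
    intro y z hC
    exact H y.natAbs y z rfl hC
  intro n
  induction n using Nat.strong_induction_on with
  | _ n ih =>
    intro y z hn hC
    by_cases hy : y = 0
    · exact hy
    exfalso
    have hmod : (c3 : ZMod p) * (y : ZMod p) ^ 3 + (c2 : ZMod p) * (y : ZMod p) ^ 2 * (z : ZMod p)
        + (c1 : ZMod p) * (y : ZMod p) * (z : ZMod p) ^ 2 + (c0 : ZMod p) * (z : ZMod p) ^ 3 = 0 := by
      have := congrArg (fun t : ℤ => (t : ZMod p)) hC
      push_cast at this
      simpa using this
    obtain ⟨hu, hv⟩ := h _ _ hmod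
    have hpy : (p : ℤ) ∣ y := (ZMod.intCast_zmod_eq_zero_iff_dvd y p).mp hu
    have hpz : (p : ℤ) ∣ z := (ZMod.intCast_zmod_eq_zero_iff_dvd z p).mp hv
    obtain ⟨y', rfl⟩ := hpy
    obtain ⟨z', rfl⟩ := hpz
    have hpne : (p : ℤ) ≠ 0 := by exact_mod_cast (by omega : p ≠ 0)
    have hC' : c3 * y' ^ 3 + c2 * y' ^ 2 * z' + c1 * y' * z' ^ 2 + c0 * z' ^ 3 = 0 := by
      have h3 : (p : ℤ) ^ 3 * (c3 * y' ^ 3 + c2 * y' ^ 2 * z' + c1 * y' * z' ^ 2 + c0 * z' ^ 3)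
          = 0 := by linear_combination hC
      exact (mul_eq_zero.mp h3).resolve_left (pow_ne_zero 3 hpne)
    have hy' : y' ≠ 0 := fun h0 => hy (by rw [h0, mul_zero])
    have hlt : y'.natAbs < n := by
      subst hn
      have h0 : 0 < y'.natAbs := Int.natAbs_pos.mpr hy'
      have : 1 * y'.natAbs < p * y'.natAbs := by
        have := (Nat.mul_lt_mul_right h0).mpr (show 1 < p by omega)
        simpa using this
      simpa [Int.natAbs_mul] using this
    exact hy' (ih y'.natAbs hlt y' z' rfl hC')

lemma case_7_9 (x y z : ℤ) (hx : 0 < x) (hxy : x < y) (hyz : y < z)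
    (h1 : y * z * (y + z - x) * (y + z)
        = 7 * (y - x) * (z - x) * (y + z - 2 * x) * (y + z - x))
    (h2 : x * z * (y + z - x) * (y + z)
        = 9 * z * (y - x) * (z - y) * (z - x)) : False := by
  have hw : (0:ℤ) < y + z - x := by linarith
  have hz : (0:ℤ) < z := by linarith
  have h1' : y * z * (y + z) = 7 * (y - x) * (z - x) * (y + z - 2 * x) :=
    mul_right_cancel₀ (ne_of_gt hw) (by linear_combination h1)
  have h2' : x * (y + z - x) * (y + z) = 9 * (y - x) * (z - y) * (z - x) := by
    have := mul_left_cancel₀ (ne_of_gt hz) (show z * (x * (y + z - x) * (y + z)) = z * (9 * (y - x) * (z - y) * (z - x)) by linear_combination h2)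
    exact this
  have hS : ((6 : ℤ) * (y^2 * z^2 * (y + z)^2 * (8 * y - 10 * z)^2))
      * ((20) * y^3 + (-75) * y^2 * z + (204) * y * z^2 + (-85) * z^3) = 0 := by
    linear_combination (57344*x*y^6*z + (-229376)*x*y^5*z^2 + 250880*x*y^4*z^3 + 89600*x*y^3*z^4 + (-308000)*x*y^2*z^5 + 140000*x*y*z^6 + 4096*y^7*z + (-86016)*y^6*z^2 + 296448*y^5*z^3 + (-298240)*y^4*z^4 + (-130800)*y^3*z^5 + 384000*y^2*z^6 + (-170000)*y*z^7) * h1' + ((-100352)*x^2*y^5*z + 275968*x^2*y^4*z^2 + (-94080)*x^2*y^3*z^3 + (-274400)*x^2*y^2*z^4 + 196000*x^2*y*z^5 + 43008*x*y^6*z + 53760*x*y^5*z^2 + (-432768)*x*y^4*z^3 + 278880*x*y^3*z^4 + 386400*x*y^2*z^5 + (-336000)*x*y*z^6 + 3584*y^7*z + (-54656)*y^6*z^2 + 93856*y^5*z^3 + 93016*y^4*z^4 + (-213080)*y^3*z^5 + (-35000)*y^2*z^6 + 119000*y*z^7) * h2'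
  have hKne : ((6 : ℤ) * (y^2 * z^2 * (y + z)^2 * (8 * y - 10 * z)^2)) ≠ 0 := by
    have hL : (8 * y - 10 * z : ℤ) ≠ 0 := ne_of_lt (by nlinarith)
    exact mul_ne_zero (by norm_num) (mul_ne_zero (mul_ne_zero (mul_ne_zero
      (pow_ne_zero 2 (by linarith : y ≠ 0)) (pow_ne_zero 2 (ne_of_gt hz)))
      (pow_ne_zero 2 (by linarith : y + z ≠ 0))) (pow_ne_zero 2 hL))
  have hC := (mul_eq_zero.mp hS).resolve_left hKne
  have h0 := cubic_descent (20) (-75) (204) (-85) 11 (by norm_num)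
    (by decide) y z hC
  linarith

lemma case_7_10 (x y z : ℤ) (hx : 0 < x) (hxy : x < y) (hyz : y < z)
    (h1 : y * z * (y + z - x) * (y + z)
        = 7 * (y - x) * (z - x) * (y + z - 2 * x) * (y + z - x))
    (h2 : x * z * (y + z - x) * (y + z)
        = 10 * z * (y - x) * (z - y) * (z - x)) : False := by
  have hw : (0:ℤ) < y + z - x := by linarith
  have hz : (0:ℤ) < z := by linarith
  have h1' : y * z * (y + z) = 7 * (y - x) * (z - x) * (y + z - 2 * x) :=
    mul_right_cancel₀ (ne_of_gt hw) (by linear_combination h1)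
  have h2' : x * (y + z - x) * (y + z) = 10 * (y - x) * (z - y) * (z - x) := by
    have := mul_left_cancel₀ (ne_of_gt hz) (show z * (x * (y + z - x) * (y + z)) = z * (10 * (y - x) * (z - y) * (z - x)) by linear_combination h2)
    exact this
  have hS : ((24 : ℤ) * (y^2 * z^2 * (y + z)^2 * (9 * y - 11 * z)^2))
      * ((12) * y^3 + (-44) * y^2 * z + (81) * y * z^2 + (-33) * z^3) = 0 := by
    linear_combination (91854*x*y^6*z + (-357210)*x*y^5*z^2 + 374220*x*y^4*z^3 + 152460*x*y^3*z^4 + (-465850)*x*y^2*z^5 + 204974*x*y*z^6 + 13122*y^7*z + (-169128)*y^6*z^2 + 512730*y^5*z^3 + (-459360)*y^4*z^4 + (-262570)*y^3*z^5 + 628232*y^2*z^6 + (-263538)*y*z^7) * h1' + ((-142884)*x^2*y^5*z + 381024*x^2*y^4*z^2 + (-116424)*x^2*y^3*z^3 + (-379456)*x^2*y^2*z^4 + 260876*x^2*y*z^5 + 51030*x*y^6*z + 119070*x*y^5*z^2 + (-638820)*x*y^4*z^3 + 343420*x*y^3*z^4 + 584430*x*y^2*z^5 + (-465850)*x*y*z^6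 + 10206*y^7*z + (-92988)*y^6*z^2 + 127134*y^5*z^3 + 167496*y^4*z^4 + (-301686)*y^3*z^5 + (-71148)*y^2*z^6 + 167706*y*z^7) * h2'
  have hKne : ((24 : ℤ) * (y^2 * z^2 * (y + z)^2 * (9 * y - 11 * z)^2)) ≠ 0 := by
    have hL : (9 * y - 11 * z : ℤ) ≠ 0 := ne_of_lt (by nlinarith)
    exact mul_ne_zero (by norm_num) (mul_ne_zero (mul_ne_zero (mul_ne_zero
      (pow_ne_zero 2 (by linarith : y ≠ 0)) (pow_ne_zero 2 (ne_of_gt hz)))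
      (pow_ne_zero 2 (by linarith : y + z ≠ 0))) (pow_ne_zero 2 hL))
  have hC := (mul_eq_zero.mp hS).resolve_left hKne
  have h0 := cubic_descent (12) (-44) (81) (-33) 13 (by norm_num)
    (by decide) y z hC
  linarith

lemma case_7_11 (x y z : ℤ) (hx : 0 < x) (hxy : x < y) (hyz : y < z)
    (h1 : y * z * (y + z - x) * (y + z)
        = 7 * (y - x) * (z - x) * (y + z - 2 * x) * (y + z - x))
    (h2 : x * z * (y + z - x) * (y + z)
        = 11 * z * (y - x) * (z - y) * (z - x)) : False := by
  have hw : (0:ℤ) < y + z - x := by linarith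
  have hz : (0:ℤ) < z := by linarith
  have h1' : y * z * (y + z) = 7 * (y - x) * (z - x) * (y + z - 2 * x) :=
    mul_right_cancel₀ (ne_of_gt hw) (by linear_combination h1)
  have h2' : x * (y + z - x) * (y + z) = 11 * (y - x) * (z - y) * (z - x) := by
    have := mul_left_cancel₀ (ne_of_gt hz) (show z * (x * (y + z - x) * (y + z)) = z * (11 * (y - x) * (z - y) * (z - x)) by linear_combination h2)
    exact this
  have hS : ((6 : ℤ) * (y^2 * z^2 * (y + z)^2 * (10 * y - 12 * z)^2))
      * ((85) * y^3 + (-306) * y^2 * z + (475) * y * z^2 + (-190) * z^3) = 0 := by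
    linear_combination (140000*x*y^6*z + (-532000)*x*y^5*z^2 + 537600*x*y^4*z^3 + 241920*x*y^3*z^4 + (-677376)*x*y^2*z^5 + 290304*x*y*z^6 + 30000*y^7*z + (-304000)*y^6*z^2 + 837200*y^5*z^3 + (-677760)*y^4*z^4 + (-473472)*y^3*z^5 + 981504*y^2*z^6 + (-393984)*y*z^7) * h1' + ((-196000)*x^2*y^5*z + 509600*x^2*y^4*z^2 + (-141120)*x^2*y^3*z^3 + (-508032)*x^2*y^2*z^4 + 338688*x^2*y*z^5 + 56000*x*y^6*z + 218400*x*y^5*z^2 + (-906080)*x*y^4*z^3 + 407232*x*y^3*z^4 + 846720*x*y^2*z^5 + (-628992)*x*y*z^6 + 21000*y^7*z + (-147000)*y^6*z^2 + 165480*y^5*z^3 + 273336*y^4*z^4 + (-412944)*y^3*z^5 + (-122976)*y^2*z^6 + 229824*y*z^7) * h2'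
  have hKne : ((6 : ℤ) * (y^2 * z^2 * (y + z)^2 * (10 * y - 12 * z)^2)) ≠ 0 := by
    have hL : (10 * y - 12 * z : ℤ) ≠ 0 := ne_of_lt (by nlinarith)
    exact mul_ne_zero (by norm_num) (mul_ne_zero (mul_ne_zero (mul_ne_zero
      (pow_ne_zero 2 (by linarith : y ≠ 0)) (pow_ne_zero 2 (ne_of_gt hz)))
      (pow_ne_zero 2 (by linarith : y + z ≠ 0))) (pow_ne_zero 2 hL))
  have hC := (mul_eq_zero.mp hS).resolve_left hKne
  have h0 := cubic_descent (85) (-306) (475) (-190) 13 (by norm_num)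
    (by decide) y z hC
  linarith

lemma case_7_12 (x y z : ℤ) (hx : 0 < x) (hxy : x < y) (hyz : y < z)
    (h1 : y * z * (y + z - x) * (y + z)
        = 7 * (y - x) * (z - x) * (y + z - 2 * x) * (y + z - x))
    (h2 : x * z * (y + z - x) * (y + z)
        = 12 * z * (y - x) * (z - y) * (z - x)) : False := by
  have hw : (0:ℤ) < y + z - x := by linarith
  have hz : (0:ℤ) < z := by linarith
  have h1' : y * z * (y + z) = 7 * (y - x) * (z - x) * (y + z - 2 * x) :=
    mul_right_cancel₀ (ne_of_gt hw) (by linear_combination h1)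
  have h2' : x * (y + z - x) * (y + z) = 12 * (y - x) * (z - y) * (z - x) := by
    have := mul_left_cancel₀ (ne_of_gt hz) (show z * (x * (y + z - x) * (y + z)) = z * (12 * (y - x) * (z - y) * (z - x)) by linear_combination h2)
    exact this
  have hS : ((24 : ℤ) * (y^2 * z^2 * (y + z)^2 * (11 * y - 13 * z)^2))
      * ((33) * y^3 + (-117) * y^2 * z + (165) * y * z^2 + (-65) * z^3) = 0 := by
    linear_combination (204974*x*y^6*z + (-763994)*x*y^5*z^2 + 748748*x*y^4*z^3 + 364364*x*y^3*z^4 + (-953498)*x*y^2*z^5 + 399854*x*y*z^6 + 58564*y^7*z + (-511104)*y^6*z^2 + 1305348*y^5*z^3 + (-965536)*y^4*z^4 + (-792948)*y^3*z^5 + 1476384*y^2*z^6 + (-571220)*y*z^7) * h1' + ((-260876)*x^2*y^5*z + 664048*x^2*y^4*z^2 + (-168168)*x^2*y^3*z^3 + (-662480)*x^2*y^2*z^4 + 430612*x^2*y*z^5 + 55902*x*y^6*z + 360822*x*y^5*z^2 + (-1244628)*x*y^4*z^3 + 466284*x*y^3*z^4 + 1185366*x*y^2*z^5 + (-830466)*x*y*z^6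 + 37268*y^7*z + (-220220)*y^6*z^2 + 208516*y^5*z^3 + 417592*y^4*z^4 + (-550004)*y^3*z^5 + (-194012)*y^2*z^6 + 307580*y*z^7) * h2'
  have hKne : ((24 : ℤ) * (y^2 * z^2 * (y + z)^2 * (11 * y - 13 * z)^2)) ≠ 0 := by
    have hL : (11 * y - 13 * z : ℤ) ≠ 0 := ne_of_lt (by nlinarith)
    exact mul_ne_zero (by norm_num) (mul_ne_zero (mul_ne_zero (mul_ne_zero
      (pow_ne_zero 2 (by linarith : y ≠ 0)) (pow_ne_zero 2 (ne_of_gt hz)))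
      (pow_ne_zero 2 (by linarith : y + z ≠ 0))) (pow_ne_zero 2 hL))
  have hC := (mul_eq_zero.mp hS).resolve_left hKne
  have h0 := cubic_descent (33) (-117) (165) (-65) 29 (by norm_num)
    (by decide) y z hC
  linarith

lemma case_7_13 (x y z : ℤ) (hx : 0 < x) (hxy : x < y) (hyz : y < z)
    (h1 : y * z * (y + z - x) * (y + z)
        = 7 * (y - x) * (z - x) * (y + z - 2 * x) * (y + z - x))
    (h2 : x * z * (y + z - x) * (y + z)
        = 13 * z * (y - x) * (z - y) * (z - x)) : False := by
  have hw : (0:ℤ) < y + z - x := by linarith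
  have hz : (0:ℤ) < z := by linarith
  have h1' : y * z * (y + z) = 7 * (y - x) * (z - x) * (y + z - 2 * x) :=
    mul_right_cancel₀ (ne_of_gt hw) (by linear_combination h1)
  have h2' : x * (y + z - x) * (y + z) = 13 * (y - x) * (z - y) * (z - x) := by
    have := mul_left_cancel₀ (ne_of_gt hz) (show z * (x * (y + z - x) * (y + z)) = z * (13 * (y - x) * (z - y) * (z - x)) by linear_combination h2)
    exact this
  have hS : ((6 : ℤ) * (y^2 * z^2 * (y + z)^2 * (12 * y - 14 * z)^2))
      * ((190) * y^3 + (-665) * y^2 * z + (882) * y * z^2 + (-343) * z^3) = 0 := by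
    linear_combination (290304*x*y^6*z + (-1064448)*x*y^5*z^2 + 1016064*x*y^4*z^3 + 526848*x*y^3*z^4 + (-1306144)*x*y^2*z^5 + 537824*x*y*z^6 + 103680*y^7*z + (-815616)*y^6*z^2 + 1959552*y^5*z^3 + (-1335936)*y^4*z^4 + (-1256752)*y^3*z^5 + 2151296*y^2*z^6 + (-806736)*y*z^7) * h1' + ((-338688)*x^2*y^5*z + 846720*x^2*y^4*z^2 + (-197568)*x^2*y^3*z^3 + (-845152)*x^2*y^2*z^4 + 537824*x^2*y*z^5 + 48384*x*y^6*z + 556416*x*y^5*z^2 + (-1665216)*x*y^4*z^3 + 515872*x*y^3*z^4 + 1613472*x*y^2*z^5 + (-1075648)*x*y*z^6 + 60480*y^7*z + (-316512)*y^6*z^2 + 255696*y^5*z^3 + 607992*y^4*z^4 + (-716184)*y^3*z^5 + (-288120)*y^2*z^6 + 403368*y*z^7) * h2'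
  have hKne : ((6 : ℤ) * (y^2 * z^2 * (y + z)^2 * (12 * y - 14 * z)^2)) ≠ 0 := by
    have hL : (12 * y - 14 * z : ℤ) ≠ 0 := ne_of_lt (by nlinarith)
    exact mul_ne_zero (by norm_num) (mul_ne_zero (mul_ne_zero (mul_ne_zero
      (pow_ne_zero 2 (by linarith : y ≠ 0)) (pow_ne_zero 2 (ne_of_gt hz)))
      (pow_ne_zero 2 (by linarith : y + z ≠ 0))) (pow_ne_zero 2 hL))
  have hC := (mul_eq_zero.mp hS).resolve_left hKne
  have h0 := cubic_descent (190) (-665) (882) (-343) 3 (by norm_num)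
    (by decide) y z hC
  linarith

lemma case_7_14 (x y z : ℤ) (hx : 0 < x) (hxy : x < y) (hyz : y < z)
    (h1 : y * z * (y + z - x) * (y + z)
        = 7 * (y - x) * (z - x) * (y + z - 2 * x) * (y + z - x))
    (h2 : x * z * (y + z - x) * (y + z)
        = 14 * z * (y - x) * (z - y) * (z - x)) : False := by
  have hw : (0:ℤ) < y + z - x := by linarith
  have hz : (0:ℤ) < z := by linarith
  have h1' : y * z * (y + z) = 7 * (y - x) * (z - x) * (y + z - 2 * x) :=
    mul_right_cancel₀ (ne_of_gt hw) (by linear_combination h1)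
  have h2' : x * (y + z - x) * (y + z) = 14 * (y - x) * (z - y) * (z - x) := by
    have := mul_left_cancel₀ (ne_of_gt hz) (show z * (x * (y + z - x) * (y + z)) = z * (14 * (y - x) * (z - y) * (z - x)) by linear_combination h2)
    exact this
  have hS : ((24 : ℤ) * (y^2 * z^2 * (y + z)^2 * (13 * y - 15 * z)^2))
      * ((65) * y^3 + (-225) * y^2 * z + (286) * y * z^2 + (-110) * z^3) = 0 := by
    linear_combination (399854*x*y^6*z + (-1445626)*x*y^5*z^2 + 1348620*x*y^4*z^3 + 737100*x*y^3*z^4 + (-1748250)*x*y^2*z^5 + 708750*x*y*z^6 + 171366*y^7*z + (-1247896)*y^6*z^2 + 2849678*y^5*z^3 + (-1803360)*y^4*z^4 + (-1907550)*y^3*z^5 + 3051000*y^2*z^6 + (-1113750)*y*z^7) * h1' + ((-430612)*x^2*y^5*z + 1059968*x^2*y^4*z^2 + (-229320)*x^2*y^3*z^3 + (-1058400)*x^2*y^2*z^4 + 661500*x^2*y*z^5 + 30758*x*y^6*z + 816270*x*y^5*z^2 + (-2179268)*x*y^4*z^3 + 550620*x*y^3*z^4 + 2145150*x*y^2*z^5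 + (-1370250)*x*y*z^6 + 92274*y^7*z + (-440076)*y^6*z^2 + 306306*y^5*z^3 + 852936*y^4*z^4 + (-914970)*y^3*z^5 + (-409500)*y^2*z^6 + 519750*y*z^7) * h2'
  have hKne : ((24 : ℤ) * (y^2 * z^2 * (y + z)^2 * (13 * y - 15 * z)^2)) ≠ 0 := by
    have hL : (13 * y - 15 * z : ℤ) ≠ 0 := ne_of_lt (by nlinarith)
    exact mul_ne_zero (by norm_num) (mul_ne_zero (mul_ne_zero (mul_ne_zero
      (pow_ne_zero 2 (by linarith : y ≠ 0)) (pow_ne_zero 2 (ne_of_gt hz)))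
      (pow_ne_zero 2 (by linarith : y + z ≠ 0))) (pow_ne_zero 2 hL))
  have hC := (mul_eq_zero.mp hS).resolve_left hKne
  have h0 := cubic_descent (65) (-225) (286) (-110) 3 (by norm_num)
    (by decide) y z hC
  linarith

lemma case_7_15 (x y z : ℤ) (hx : 0 < x) (hxy : x < y) (hyz : y < z)
    (h1 : y * z * (y + z - x) * (y + z)
        = 7 * (y - x) * (z - x) * (y + z - 2 * x) * (y + z - x))
    (h2 : x * z * (y + z - x) * (y + z)
        = 15 * z * (y - x) * (z - y) * (z - x)) : False := by
  have hw : (0:ℤ) < y + z - x := by linarith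
  have hz : (0:ℤ) < z := by linarith
  have h1' : y * z * (y + z) = 7 * (y - x) * (z - x) * (y + z - 2 * x) :=
    mul_right_cancel₀ (ne_of_gt hw) (by linear_combination h1)
  have h2' : x * (y + z - x) * (y + z) = 15 * (y - x) * (z - y) * (z - x) := by
    have := mul_left_cancel₀ (ne_of_gt hz) (show z * (x * (y + z - x) * (y + z)) = z * (15 * (y - x) * (z - y) * (z - x)) by linear_combination h2)
    exact this
  have hS : ((6 : ℤ) * (y^2 * z^2 * (y + z)^2 * (14 * y - 16 * z)^2))
      * ((343) * y^3 + (-1176) * y^2 * z + (1449) * y * z^2 + (-552) * z^3) = 0 := by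
    linear_combination (537824*x*y^6*z + (-1920800)*x*y^5*z^2 + 1756160*x*y^4*z^3 + 1003520*x*y^3*z^4 + (-2293760)*x*y^2*z^5 + 917504*x*y*z^6 + 268912*y^7*z + (-1843968)*y^6*z^2 + 4033680*y^5*z^3 + (-2383360)*y^4*z^4 + (-2795520)*y^3*z^5 + 4227072*y^2*z^6 + (-1507328)*y*z^7) * h1' + ((-537824)*x^2*y^5*z + 1306144*x^2*y^4*z^2 + (-263424)*x^2*y^3*z^3 + (-1304576)*x^2*y^2*z^4 + 802816*x^2*y*z^5 + 1152480*x*y^5*z^2 + (-2798880)*x*y^4*z^3 + 564480*x*y^3*z^4 + 2795520*x*y^2*z^5 + (-1720320)*x*y*z^6 + 134456*y^7*z + (-595448)*y^6*z^2 + 359464*y^5*z^3 + 1161496*y^4*z^4 + (-1150016)*y^3*z^5 + (-562688)*y^2*z^6 + 659456*y*z^7) * h2'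
  have hKne : ((6 : ℤ) * (y^2 * z^2 * (y + z)^2 * (14 * y - 16 * z)^2)) ≠ 0 := by
    have hL : (14 * y - 16 * z : ℤ) ≠ 0 := ne_of_lt (by nlinarith)
    exact mul_ne_zero (by norm_num) (mul_ne_zero (mul_ne_zero (mul_ne_zero
      (pow_ne_zero 2 (by linarith : y ≠ 0)) (pow_ne_zero 2 (ne_of_gt hz)))
      (pow_ne_zero 2 (by linarith : y + z ≠ 0))) (pow_ne_zero 2 hL))
  have hC := (mul_eq_zero.mp hS).resolve_left hKne
  have h0 := cubic_descent (343) (-1176) (1449) (-552) 13 (by norm_num)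
    (by decide) y z hC
  linarith

lemma case_8_10 (x y z : ℤ) (hx : 0 < x) (hxy : x < y) (hyz : y < z)
    (h1 : y * z * (y + z - x) * (y + z)
        = 8 * (y - x) * (z - x) * (y + z - 2 * x) * (y + z - x))
    (h2 : x * z * (y + z - x) * (y + z)
        = 10 * z * (y - x) * (z - y) * (z - x)) : False := by
  have hw : (0:ℤ) < y + z - x := by linarith
  have hz : (0:ℤ) < z := by linarith
  have h1' : y * z * (y + z) = 8 * (y - x) * (z - x) * (y + z - 2 * x) :=
    mul_right_cancel₀ (ne_of_gt hw) (by linear_combination h1)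
  have h2' : x * (y + z - x) * (y + z) = 10 * (y - x) * (z - y) * (z - x) := by
    have := mul_left_cancel₀ (ne_of_gt hz) (show z * (x * (y + z - x) * (y + z)) = z * (10 * (y - x) * (z - y) * (z - x)) by linear_combination h2)
    exact this
  have hS : ((3 : ℤ) * (y^2 * z^2 * (y + z)^2 * (9 * y - 11 * z)^2))
      * ((51) * y^3 + (-187) * y^2 * z + (513) * y * z^2 + (-209) * z^3) = 0 := by
    linear_combination (104976*x*y^6*z + (-408240)*x*y^5*z^2 + 427680*x*y^4*z^3 + 174240*x*y^3*z^4 + (-532400)*x*y^2*z^5 + 234256*x*y*z^6 + 6561*y^7*z + (-150174)*y^6*z^2 + 511515*y^5*z^3 + (-496980)*y^4*z^4 + (-240185)*y^3*z^5 + 646866*y^2*z^6 + (-278179)*y*z^7) * h1' + ((-186624)*x^2*y^5*z + 497664*x^2*y^4*z^2 + (-152064)*x^2*y^3*z^3 + (-495616)*x^2*y^2*z^4 + 340736*x^2*y*z^5 + 81648*x*y^6*z + 97200*x*y^5*z^2 + (-773280)*x*y^4*z^3 + 473440*x*y^3*z^4 + 687280*x*y^2*z^5 + (-574992)*x*y*z^6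 + 5832*y^7*z + (-99792)*y^6*z^2 + 164664*y^5*z^3 + 175776*y^4*z^4 + (-368456)*y^3*z^5 + (-71632)*y^2*z^6 + 202312*y*z^7) * h2'
  have hKne : ((3 : ℤ) * (y^2 * z^2 * (y + z)^2 * (9 * y - 11 * z)^2)) ≠ 0 := by
    have hL : (9 * y - 11 * z : ℤ) ≠ 0 := ne_of_lt (by nlinarith)
    exact mul_ne_zero (by norm_num) (mul_ne_zero (mul_ne_zero (mul_ne_zero
      (pow_ne_zero 2 (by linarith : y ≠ 0)) (pow_ne_zero 2 (ne_of_gt hz)))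
      (pow_ne_zero 2 (by linarith : y + z ≠ 0))) (pow_ne_zero 2 hL))
  have hC := (mul_eq_zero.mp hS).resolve_left hKne
  have h0 := cubic_descent (51) (-187) (513) (-209) 29 (by norm_num)
    (by decide) y z hC
  linarith

lemma case_8_11 (x y z : ℤ) (hx : 0 < x) (hxy : x < y) (hyz : y < z)
    (h1 : y * z * (y + z - x) * (y + z)
        = 8 * (y - x) * (z - x) * (y + z - 2 * x) * (y + z - x))
    (h2 : x * z * (y + z - x) * (y + z)
        = 11 * z * (y - x) * (z - y) * (z - x)) : False := by
  have hw : (0:ℤ) < y + z - x := by linarith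
  have hz : (0:ℤ) < z := by linarith
  have h1' : y * z * (y + z) = 8 * (y - x) * (z - x) * (y + z - 2 * x) :=
    mul_right_cancel₀ (ne_of_gt hw) (by linear_combination h1)
  have h2' : x * (y + z - x) * (y + z) = 11 * (y - x) * (z - y) * (z - x) := by
    have := mul_left_cancel₀ (ne_of_gt hz) (show z * (x * (y + z - x) * (y + z)) = z * (11 * (y - x) * (z - y) * (z - x)) by linear_combination h2)
    exact this
  have hS : ((24 : ℤ) * (y^2 * z^2 * (y + z)^2 * (10 * y - 12 * z)^2))
      * ((15) * y^3 + (-54) * y^2 * z + (100) * y * z^2 + (-40) * z^3) = 0 := by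
    linear_combination (160000*x*y^6*z + (-608000)*x*y^5*z^2 + 614400*x*y^4*z^3 + 276480*x*y^3*z^4 + (-774144)*x*y^2*z^5 + 331776*x*y*z^6 + 20000*y^7*z + (-276000)*y^6*z^2 + 836800*y^5*z^3 + (-733440)*y^4*z^4 + (-442368)*y^3*z^5 + 1009152*y^2*z^6 + (-414720)*y*z^7) * h1' + ((-256000)*x^2*y^5*z + 665600*x^2*y^4*z^2 + (-184320)*x^2*y^3*z^3 + (-663552)*x^2*y^2*z^4 + 442368*x^2*y*z^5 + 96000*x*y^6*z + 198400*x*y^5*z^2 + (-1095680)*x*y^4*z^3 + 571392*x*y^3*z^4 + 995328*x*y^2*z^5 + (-774144)*x*y*z^6 + 16000*y^7*z + (-160000)*y^6*z^2 + 215680*y^5*z^3 + 293376*y^4*z^4 + (-503808)*y^3*z^5 + (-129024)*y^2*z^6 + 276480*y*z^7) * h2'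
  have hKne : ((24 : ℤ) * (y^2 * z^2 * (y + z)^2 * (10 * y - 12 * z)^2)) ≠ 0 := by
    have hL : (10 * y - 12 * z : ℤ) ≠ 0 := ne_of_lt (by nlinarith)
    exact mul_ne_zero (by norm_num) (mul_ne_zero (mul_ne_zero (mul_ne_zero
      (pow_ne_zero 2 (by linarith : y ≠ 0)) (pow_ne_zero 2 (ne_of_gt hz)))
      (pow_ne_zero 2 (by linarith : y + z ≠ 0))) (pow_ne_zero 2 hL))
  have hC := (mul_eq_zero.mp hS).resolve_left hKne
  have h0 := cubic_descent (15) (-54) (100) (-40) 17 (by norm_num)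
    (by decide) y z hC
  linarith

lemma case_8_12 (x y z : ℤ) (hx : 0 < x) (hxy : x < y) (hyz : y < z)
    (h1 : y * z * (y + z - x) * (y + z)
        = 8 * (y - x) * (z - x) * (y + z - 2 * x) * (y + z - x))
    (h2 : x * z * (y + z - x) * (y + z)
        = 12 * z * (y - x) * (z - y) * (z - x)) : False := by
  have hw : (0:ℤ) < y + z - x := by linarith
  have hz : (0:ℤ) < z := by linarith
  have h1' : y * z * (y + z) = 8 * (y - x) * (z - x) * (y + z - 2 * x) :=
    mul_right_cancel₀ (ne_of_gt hw) (by linear_combination h1)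
  have h2' : x * (y + z - x) * (y + z) = 12 * (y - x) * (z - y) * (z - x) := by
    have := mul_left_cancel₀ (ne_of_gt hz) (show z * (x * (y + z - x) * (y + z)) = z * (12 * (y - x) * (z - y) * (z - x)) by linear_combination h2)
    exact this
  have hS : ((3 : ℤ) * (y^2 * z^2 * (y + z)^2 * (11 * y - 13 * z)^2))
      * ((209) * y^3 + (-741) * y^2 * z + (1155) * y * z^2 + (-455) * z^3) = 0 := by
    linear_combination (234256*x*y^6*z + (-873136)*x*y^5*z^2 + 855712*x*y^4*z^3 + 416416*x*y^3*z^4 + (-1089712)*x*y^2*z^5 + 456976*x*y*z^6 + 43923*y^7*z + (-471174)*y^6*z^2 + 1306437*y^5*z^3 + (-1045044)*y^4*z^4 + (-750867)*y^3*z^5 + 1515930*y^2*z^6 + (-599781)*y*z^7) * h1' + ((-340736)*x^2*y^5*z + 867328*x^2*y^4*z^2 + (-219648)*x^2*y^3*z^3 + (-865280)*x^2*y^2*z^4 + 562432*x^2*y*z^5 + 106480*x*y^6*z + 346544*x*y^5*z^2 + (-1503392)*x*y^4*z^3 + 668512*x*y^3*z^4 + 1392560*x*y^2*z^5 + (-1019408)*x*y*z^6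 + 31944*y^7*z + (-242000)*y^6*z^2 + 273592*y^5*z^3 + 454560*y^4*z^4 + (-670280)*y^3*z^5 + (-208208)*y^2*z^6 + 369096*y*z^7) * h2'
  have hKne : ((3 : ℤ) * (y^2 * z^2 * (y + z)^2 * (11 * y - 13 * z)^2)) ≠ 0 := by
    have hL : (11 * y - 13 * z : ℤ) ≠ 0 := ne_of_lt (by nlinarith)
    exact mul_ne_zero (by norm_num) (mul_ne_zero (mul_ne_zero (mul_ne_zero
      (pow_ne_zero 2 (by linarith : y ≠ 0)) (pow_ne_zero 2 (ne_of_gt hz)))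
      (pow_ne_zero 2 (by linarith : y + z ≠ 0))) (pow_ne_zero 2 hL))
  have hC := (mul_eq_zero.mp hS).resolve_left hKne
  have h0 := cubic_descent (209) (-741) (1155) (-455) 23 (by norm_num)
    (by decide) y z hC
  linarith

lemma case_8_13 (x y z : ℤ) (hx : 0 < x) (hxy : x < y) (hyz : y < z)
    (h1 : y * z * (y + z - x) * (y + z)
        = 8 * (y - x) * (z - x) * (y + z - 2 * x) * (y + z - x))
    (h2 : x * z * (y + z - x) * (y + z)
        = 13 * z * (y - x) * (z - y) * (z - x)) : False := by
  have hw : (0:ℤ) < y + z - x := by linarith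
  have hz : (0:ℤ) < z := by linarith
  have h1' : y * z * (y + z) = 8 * (y - x) * (z - x) * (y + z - 2 * x) :=
    mul_right_cancel₀ (ne_of_gt hw) (by linear_combination h1)
  have h2' : x * (y + z - x) * (y + z) = 13 * (y - x) * (z - y) * (z - x) := by
    have := mul_left_cancel₀ (ne_of_gt hz) (show z * (x * (y + z - x) * (y + z)) = z * (13 * (y - x) * (z - y) * (z - x)) by linear_combination h2)
    exact this
  have hS : ((24 : ℤ) * (y^2 * z^2 * (y + z)^2 * (12 * y - 14 * z)^2))
      * ((40) * y^3 + (-140) * y^2 * z + (198) * y * z^2 + (-77) * z^3) = 0 := by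
    linear_combination (331776*x*y^6*z + (-1216512)*x*y^5*z^2 + 1161216*x*y^4*z^3 + 602112*x*y^3*z^4 + (-1492736)*x*y^2*z^5 + 614656*x*y*z^6 + 82944*y^7*z + (-760320)*y^6*z^2 + 1963008*y^5*z^3 + (-1446144)*y^4*z^4 + (-1201088)*y^3*z^5 + 2206176*y^2*z^6 + (-845152)*y*z^7) * h1' + ((-442368)*x^2*y^5*z + 1105920*x^2*y^4*z^2 + (-258048)*x^2*y^3*z^3 + (-1103872)*x^2*y^2*z^4 + 702464*x^2*y*z^5 + 110592*x*y^6*z + 552960*x*y^5*z^2 + (-2009088)*x*y^4*z^3 + 759808*x*y^3*z^4 + 1894144*x*y^2*z^5 + (-1317120)*x*y*z^6 + 55296*y^7*z + (-350208)*y^6*z^2 + 337920*y^5*z^3 + 668160*y^4*z^4 + (-871808)*y^3*z^5 + (-313600)*y^2*z^6 + 482944*y*z^7) * h2'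
  have hKne : ((24 : ℤ) * (y^2 * z^2 * (y + z)^2 * (12 * y - 14 * z)^2)) ≠ 0 := by
    have hL : (12 * y - 14 * z : ℤ) ≠ 0 := ne_of_lt (by nlinarith)
    exact mul_ne_zero (by norm_num) (mul_ne_zero (mul_ne_zero (mul_ne_zero
      (pow_ne_zero 2 (by linarith : y ≠ 0)) (pow_ne_zero 2 (ne_of_gt hz)))
      (pow_ne_zero 2 (by linarith : y + z ≠ 0))) (pow_ne_zero 2 hL))
  have hC := (mul_eq_zero.mp hS).resolve_left hKne
  have h0 := cubic_descent (40) (-140) (198) (-77) 17 (by norm_num)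
    (by decide) y z hC
  linarith

lemma case_8_14 (x y z : ℤ) (hx : 0 < x) (hxy : x < y) (hyz : y < z)
    (h1 : y * z * (y + z - x) * (y + z)
        = 8 * (y - x) * (z - x) * (y + z - 2 * x) * (y + z - x))
    (h2 : x * z * (y + z - x) * (y + z)
        = 14 * z * (y - x) * (z - y) * (z - x)) : False := by
  have hw : (0:ℤ) < y + z - x := by linarith
  have hz : (0:ℤ) < z := by linarith
  have h1' : y * z * (y + z) = 8 * (y - x) * (z - x) * (y + z - 2 * x) :=
    mul_right_cancel₀ (ne_of_gt hw) (by linear_combination h1)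
  have h2' : x * (y + z - x) * (y + z) = 14 * (y - x) * (z - y) * (z - x) := by
    have := mul_left_cancel₀ (ne_of_gt hz) (show z * (x * (y + z - x) * (y + z)) = z * (14 * (y - x) * (z - y) * (z - x)) by linear_combination h2)
    exact this
  have hS : ((21 : ℤ) * (y^2 * z^2 * (y + z)^2 * (13 * y - 15 * z)^2))
      * ((65) * y^3 + (-225) * y^2 * z + (299) * y * z^2 + (-115) * z^3) = 0 := by
    linear_combination (456976*x*y^6*z + (-1652144)*x*y^5*z^2 + 1541280*x*y^4*z^3 + 842400*x*y^3*z^4 + (-1998000)*x*y^2*z^5 + 810000*x*y*z^6 + 142805*y^7*z + (-1173198)*y^6*z^2 + 2856607*y^5*z^3 + (-1952340)*y^4*z^4 + (-1835325)*y^3*z^5 + 3125250*y^2*z^6 + (-1164375)*y*z^7) * h1' + ((-562432)*x^2*y^5*z + 1384448*x^2*y^4*z^2 + (-299520)*x^2*y^3*z^3 + (-1382400)*x^2*y^2*z^4 + 864000*x^2*y*z^5 + 105456*x*y^6*z + 830128*x*y^5*z^2 + (-2626208)*x*y^4*z^3 + 839520*x*y^3*z^4 + 2516400*x*y^2*z^5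 + (-1674000)*x*y*z^6 + 87880*y^7*z + (-489424)*y^6*z^2 + 407992*y^5*z^3 + 943776*y^4*z^4 + (-1112520)*y^3*z^5 + (-450000)*y^2*z^6 + 621000*y*z^7) * h2'
  have hKne : ((21 : ℤ) * (y^2 * z^2 * (y + z)^2 * (13 * y - 15 * z)^2)) ≠ 0 := by
    have hL : (13 * y - 15 * z : ℤ) ≠ 0 := ne_of_lt (by nlinarith)
    exact mul_ne_zero (by norm_num) (mul_ne_zero (mul_ne_zero (mul_ne_zero
      (pow_ne_zero 2 (by linarith : y ≠ 0)) (pow_ne_zero 2 (ne_of_gt hz)))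
      (pow_ne_zero 2 (by linarith : y + z ≠ 0))) (pow_ne_zero 2 hL))
  have hC := (mul_eq_zero.mp hS).resolve_left hKne
  have h0 := cubic_descent (65) (-225) (299) (-115) 7 (by norm_num)
    (by decide) y z hC
  linarith

lemma case_9_11 (x y z : ℤ) (hx : 0 < x) (hxy : x < y) (hyz : y < z)
    (h1 : y * z * (y + z - x) * (y + z)
        = 9 * (y - x) * (z - x) * (y + z - 2 * x) * (y + z - x))
    (h2 : x * z * (y + z - x) * (y + z)
        = 11 * z * (y - x) * (z - y) * (z - x)) : False := by
  have hw : (0:ℤ) < y + z - x := by linarith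
  have hz : (0:ℤ) < z := by linarith
  have h1' : y * z * (y + z) = 9 * (y - x) * (z - x) * (y + z - 2 * x) :=
    mul_right_cancel₀ (ne_of_gt hw) (by linear_combination h1)
  have h2' : x * (y + z - x) * (y + z) = 11 * (y - x) * (z - y) * (z - x) := by
    have := mul_left_cancel₀ (ne_of_gt hz) (show z * (x * (y + z - x) * (y + z)) = z * (11 * (y - x) * (z - y) * (z - x)) by linear_combination h2)
    exact this
  have hS : ((2 : ℤ) * (y^2 * z^2 * (y + z)^2 * (10 * y - 12 * z)^2))
      * ((95) * y^3 + (-342) * y^2 * z + (945) * y * z^2 + (-378) * z^3) = 0 := by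
    linear_combination (180000*x*y^6*z + (-684000)*x*y^5*z^2 + 691200*x*y^4*z^3 + 311040*x*y^3*z^4 + (-870912)*x*y^2*z^5 + 373248*x*y*z^6 + 10000*y^7*z + (-248000)*y^6*z^2 + 836400*y^5*z^3 + (-789120)*y^4*z^4 + (-411264)*y^3*z^5 + 1036800*y^2*z^6 + (-435456)*y*z^7) * h1' + ((-324000)*x^2*y^5*z + 842400*x^2*y^4*z^2 + (-233280)*x^2*y^3*z^3 + (-839808)*x^2*y^2*z^4 + 559872*x^2*y*z^5 + 144000*x*y^6*z + 165600*x*y^5*z^2 + (-1300320)*x*y^4*z^3 + 762048*x*y^3*z^4 + 1150848*x*y^2*z^5 + (-933120)*x*y*z^6 + 9000*y^7*z + (-171000)*y^6*z^2 + 272520*y^5*z^3 + 308664*y^4*z^4 + (-602640)*y^3*z^5 + (-132192)*y^2*z^6 + 326592*y*z^7) * h2'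
  have hKne : ((2 : ℤ) * (y^2 * z^2 * (y + z)^2 * (10 * y - 12 * z)^2)) ≠ 0 := by
    have hL : (10 * y - 12 * z : ℤ) ≠ 0 := ne_of_lt (by nlinarith)
    exact mul_ne_zero (by norm_num) (mul_ne_zero (mul_ne_zero (mul_ne_zero
      (pow_ne_zero 2 (by linarith : y ≠ 0)) (pow_ne_zero 2 (ne_of_gt hz)))
      (pow_ne_zero 2 (by linarith : y + z ≠ 0))) (pow_ne_zero 2 hL))
  have hC := (mul_eq_zero.mp hS).resolve_left hKne
  have h0 := cubic_descent (95) (-342) (945) (-378) 13 (by norm_num)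
    (by decide) y z hC
  linarith

lemma case_9_12 (x y z : ℤ) (hx : 0 < x) (hxy : x < y) (hyz : y < z)
    (h1 : y * z * (y + z - x) * (y + z)
        = 9 * (y - x) * (z - x) * (y + z - 2 * x) * (y + z - x))
    (h2 : x * z * (y + z - x) * (y + z)
        = 12 * z * (y - x) * (z - y) * (z - x)) : False := by
  have hw : (0:ℤ) < y + z - x := by linarith
  have hz : (0:ℤ) < z := by linarith
  have h1' : y * z * (y + z) = 9 * (y - x) * (z - x) * (y + z - 2 * x) :=
    mul_right_cancel₀ (ne_of_gt hw) (by linear_combination h1)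
  have h2' : x * (y + z - x) * (y + z) = 12 * (y - x) * (z - y) * (z - x) := by
    have := mul_left_cancel₀ (ne_of_gt hz) (show z * (x * (y + z - x) * (y + z)) = z * (12 * (y - x) * (z - y) * (z - x)) by linear_combination h2)
    exact this
  have hS : ((8 : ℤ) * (y^2 * z^2 * (y + z)^2 * (11 * y - 13 * z)^2))
      * ((55) * y^3 + (-195) * y^2 * z + (363) * y * z^2 + (-143) * z^3) = 0 := by
    linear_combination (263538*x*y^6*z + (-982278)*x*y^5*z^2 + 962676*x*y^4*z^3 + 468468*x*y^3*z^4 + (-1225926)*x*y^2*z^5 + 514098*x*y*z^6 + 29282*y^7*z + (-431244)*y^6*z^2 + 1307526*y^5*z^3 + (-1124552)*y^4*z^4 + (-708786)*y^3*z^5 + 1555476*y^2*z^6 + (-628342)*y*z^7) * h1' + ((-431244)*x^2*y^5*z + 1097712*x^2*y^4*z^2 + (-277992)*x^2*y^3*z^3 + (-1095120)*x^2*y^2*z^4 + 711828*x^2*y*z^5 + 167706*x*y^6*z + 315810*x*y^5*z^2 + (-1782396)*x*y^4*z^3 + 904644*x*y^3*z^4 + 1609218*x*y^2*z^5 + (-1225926)*x*y*z^6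 + 23958*y^7*z + (-261360)*y^6*z^2 + 347490*y^5*z^3 + 485856*y^4*z^4 + (-800982)*y^3*z^5 + (-219024)*y^2*z^6 + 435006*y*z^7) * h2'
  have hKne : ((8 : ℤ) * (y^2 * z^2 * (y + z)^2 * (11 * y - 13 * z)^2)) ≠ 0 := by
    have hL : (11 * y - 13 * z : ℤ) ≠ 0 := ne_of_lt (by nlinarith)
    exact mul_ne_zero (by norm_num) (mul_ne_zero (mul_ne_zero (mul_ne_zero
      (pow_ne_zero 2 (by linarith : y ≠ 0)) (pow_ne_zero 2 (ne_of_gt hz)))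
      (pow_ne_zero 2 (by linarith : y + z ≠ 0))) (pow_ne_zero 2 hL))
  have hC := (mul_eq_zero.mp hS).resolve_left hKne
  have h0 := cubic_descent (55) (-195) (363) (-143) 19 (by norm_num)
    (by decide) y z hC
  linarith

lemma case_9_13 (x y z : ℤ) (hx : 0 < x) (hxy : x < y) (hyz : y < z)
    (h1 : y * z * (y + z - x) * (y + z)
        = 9 * (y - x) * (z - x) * (y + z - 2 * x) * (y + z - x))
    (h2 : x * z * (y + z - x) * (y + z)
        = 13 * z * (y - x) * (z - y) * (z - x)) : False := by
  have hw : (0:ℤ) < y + z - x := by linarith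
  have hz : (0:ℤ) < z := by linarith
  have h1' : y * z * (y + z) = 9 * (y - x) * (z - x) * (y + z - 2 * x) :=
    mul_right_cancel₀ (ne_of_gt hw) (by linear_combination h1)
  have h2' : x * (y + z - x) * (y + z) = 13 * (y - x) * (z - y) * (z - x) := by
    have := mul_left_cancel₀ (ne_of_gt hz) (show z * (x * (y + z - x) * (y + z)) = z * (13 * (y - x) * (z - y) * (z - x)) by linear_combination h2)
    exact this
  have hS : ((2 : ℤ) * (y^2 * z^2 * (y + z)^2 * (12 * y - 14 * z)^2))
      * ((378) * y^3 + (-1323) * y^2 * z + (2070) * y * z^2 + (-805) * z^3) = 0 := by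
    linear_combination (373248*x*y^6*z + (-1368576)*x*y^5*z^2 + 1306368*x*y^4*z^3 + 677376*x*y^3*z^4 + (-1679328)*x*y^2*z^5 + 691488*x*y*z^6 + 62208*y^7*z + (-705024)*y^6*z^2 + 1966464*y^5*z^3 + (-1556352)*y^4*z^4 + (-1145424)*y^3*z^5 + 2261056*y^2*z^6 + (-883568)*y*z^7) * h1' + ((-559872)*x^2*y^5*z + 1399680*x^2*y^4*z^2 + (-326592)*x^2*y^3*z^3 + (-1397088)*x^2*y^2*z^4 + 889056*x^2*y*z^5 + 186624*x*y^6*z + 528768*x*y^5*z^2 + (-2379456)*x*y^4*z^3 + 1046304*x*y^3*z^4 + 2187360*x*y^2*z^5 + (-1580544)*x*y*z^6 + 46656*y^7*z + (-381024)*y^6*z^2 + 431568*y^5*z^3 + 721656*y^4*z^4 + (-1040760)*y^3*z^5 + (-335160)*y^2*z^6 + 568008*y*z^7) * h2'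
  have hKne : ((2 : ℤ) * (y^2 * z^2 * (y + z)^2 * (12 * y - 14 * z)^2)) ≠ 0 := by
    have hL : (12 * y - 14 * z : ℤ) ≠ 0 := ne_of_lt (by nlinarith)
    exact mul_ne_zero (by norm_num) (mul_ne_zero (mul_ne_zero (mul_ne_zero
      (pow_ne_zero 2 (by linarith : y ≠ 0)) (pow_ne_zero 2 (ne_of_gt hz)))
      (pow_ne_zero 2 (by linarith : y + z ≠ 0))) (pow_ne_zero 2 hL))
  have hC := (mul_eq_zero.mp hS).resolve_left hKne
  have h0 := cubic_descent (378) (-1323) (2070) (-805) 17 (by norm_num)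
    (by decide) y z hC
  linarith

lemma case_10_12 (x y z : ℤ) (hx : 0 < x) (hxy : x < y) (hyz : y < z)
    (h1 : y * z * (y + z - x) * (y + z)
        = 10 * (y - x) * (z - x) * (y + z - 2 * x) * (y + z - x))
    (h2 : x * z * (y + z - x) * (y + z)
        = 12 * z * (y - x) * (z - y) * (z - x)) : False := by
  have hw : (0:ℤ) < y + z - x := by linarith
  have hz : (0:ℤ) < z := by linarith
  have h1' : y * z * (y + z) = 10 * (y - x) * (z - x) * (y + z - 2 * x) :=
    mul_right_cancel₀ (ne_of_gt hw) (by linear_combination h1)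
  have h2' : x * (y + z - x) * (y + z) = 12 * (y - x) * (z - y) * (z - x) := by
    have := mul_left_cancel₀ (ne_of_gt hz) (show z * (x * (y + z - x) * (y + z)) = z * (12 * (y - x) * (z - y) * (z - x)) by linear_combination h2)
    exact this
  have hS : ((3 : ℤ) * (y^2 * z^2 * (y + z)^2 * (11 * y - 13 * z)^2))
      * ((77) * y^3 + (-273) * y^2 * z + (759) * y * z^2 + (-299) * z^3) = 0 := by
    linear_combination (292820*x*y^6*z + (-1091420)*x*y^5*z^2 + 1069640*x*y^4*z^3 + 520520*x*y^3*z^4 + (-1362140)*x*y^2*z^5 + 571220*x*y*z^6 + 14641*y^7*z + (-391314)*y^6*z^2 + 1308615*y^5*z^3 + (-1204060)*y^4*z^4 + (-666705)*y^3*z^5 + 1595022*y^2*z^6 + (-656903)*y*z^7) * h1' + ((-532400)*x^2*y^5*z + 1355200*x^2*y^4*z^2 + (-343200)*x^2*y^3*z^3 + (-1352000)*x^2*y^2*z^4 + 878800*x^2*y*z^5 + 239580*x*y^6*z + 268620*x*y^5*z^2 + (-2081640)*x*y^4*z^3 + 1174680*x*y^3*z^4 + 1835340*x*y^2*z^5 +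 (-1450020)*x*y*z^6 + 13310*y^7*z + (-278300)*y^6*z^2 + 430210*y^5*z^3 + 511480*y^4*z^4 + (-942110)*y^3*z^5 + (-226460)*y^2*z^6 + 505310*y*z^7) * h2'
  have hKne : ((3 : ℤ) * (y^2 * z^2 * (y + z)^2 * (11 * y - 13 * z)^2)) ≠ 0 := by
    have hL : (11 * y - 13 * z : ℤ) ≠ 0 := ne_of_lt (by nlinarith)
    exact mul_ne_zero (by norm_num) (mul_ne_zero (mul_ne_zero (mul_ne_zero
      (pow_ne_zero 2 (by linarith : y ≠ 0)) (pow_ne_zero 2 (ne_of_gt hz)))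
      (pow_ne_zero 2 (by linarith : y + z ≠ 0))) (pow_ne_zero 2 hL))
  have hC := (mul_eq_zero.mp hS).resolve_left hKne
  have h0 := cubic_descent (77) (-273) (759) (-299) 19 (by norm_num)
    (by decide) y z hC
  linarith


/-- For each of the sixteen pairs `(a, b)` listed, there are no integers
`0 < x < y < z` satisfying `yz(y + z − x)(y + z) = a(y − x)(z − x)(y + z − 2x)(y + z − x)`
and `xz(y + z − x)(y + z) = b·z·(y − x)(z − y)(z − x)`; i.e., no self-dual
codimension-5 degree sequence `D = (0, x, y, z, y + z − x, y + z)` has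
`π_1(D) = a` and `π_2(D) = b`. -/
theorem no_selfdual_codim5_degree_sequence
    (a b : ℤ)
    (hab : (a, b) ∈ ([(7,9), (7,10), (7,11), (7,12), (7,13), (7,14), (7,15),
      (8,10), (8,11), (8,12), (8,13), (8,14), (9,11), (9,12), (9,13),
      (10,12)] : List (ℤ × ℤ))) :
    ¬ ∃ x y z : ℤ, 0 < x ∧ x < y ∧ y < z ∧
      y * z * (y + z - x) * (y + z)
        = a * (y - x) * (z - x) * (y + z - 2 * x) * (y + z - x) ∧
      x * z * (y + z - x) * (y + z)
        = b * z * (y - x) * (z - y) * (z - x) := by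
  rintro ⟨x, y, z, hx, hxy, hyz, h1, h2⟩
  simp only [List.mem_cons, List.not_mem_nil, or_false, Prod.mk.injEq] at hab
  rcases hab with ⟨rfl, rfl⟩ | ⟨rfl, rfl⟩ | ⟨rfl, rfl⟩ | ⟨rfl, rfl⟩ | ⟨rfl, rfl⟩ | ⟨rfl, rfl⟩ | ⟨rfl, rfl⟩ | ⟨rfl, rfl⟩ | ⟨rfl, rfl⟩ | ⟨rfl, rfl⟩ | ⟨rfl, rfl⟩ | ⟨rfl, rfl⟩ | ⟨rfl, rfl⟩ | ⟨rfl, rfl⟩ | ⟨rfl, rfl⟩ | ⟨rfl, rfl⟩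
  · exact case_7_9 x y z hx hxy hyz h1 h2
  · exact case_7_10 x y z hx hxy hyz h1 h2
  · exact case_7_11 x y z hx hxy hyz h1 h2
  · exact case_7_12 x y z hx hxy hyz h1 h2
  · exact case_7_13 x y z hx hxy hyz h1 h2
  · exact case_7_14 x y z hx hxy hyz h1 h2
  · exact case_7_15 x y z hx hxy hyz h1 h2
  · exact case_8_10 x y z hx hxy hyz h1 h2
  · exact case_8_11 x y z hx hxy hyz h1 h2
  · exact case_8_12 x y z hx hxy hyz h1 h2
  · exact case_8_13 x y z hx hxy hyz h1 h2
  · exact case_8_14 x y z hx hxy hyz h1 h2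
  · exact case_9_11 x y z hx hxy hyz h1 h2
  · exact case_9_12 x y z hx hxy hyz h1 h2
  · exact case_9_13 x y z hx hxy hyz h1 h2
  · exact case_10_12 x y z hx hxy hyz h1 h2
end
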